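/- arXiv:2204.11299 — 5 statements merged into one kernel-verified Lean document; each statement's English description precedes it below -/
import Mathlib

section
/- Let A be an n×n complex Hermitian matrix that is not a scalar multiple of the identity, with diagonal entries ordered so that a_{11} ≤ a_{22} ≤ ... ≤ a_{nn}. Let λ_1(A) denote the smallest eigenvalue of A, let q_1 = Σ_{j≠1} |a_{1j}|², and for each i let r_i = Σ_{j≠i} |a_{ij}|. Then λ_1(A) ≤ a_{11} − q_1 / (max_i (a_{ii} + r_i) − a_{11}), where the denominator max_i (a_{ii} + r_i) − a_{11} is strictly positive. -/
open Matrix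
open scoped ComplexOrder
open scoped MatrixOrder

private lemma diag_entry_eval {n : ℕ} (X : Matrix (Fin n) (Fin n) ℂ) (i : Fin n) :
    dotProduct (star (Pi.single i (1:ℂ))) (X *ᵥ Pi.single i (1:ℂ)) = X i i := by
  classical
  simp [Matrix.mulVec_single, dotProduct, Pi.single_apply, apply_ite, Finset.sum_ite_eq']

private lemma shift_psd_left {n : ℕ} {A : Matrix (Fin n) (Fin n) ℂ} (hA : A.IsHermitian) {t : ℝ}
    (h : ∀ i, t ≤ hA.eigenvalues i) : (A - (t : ℂ) • 1).PosSemidef := by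
  classical
  have hU : (hA.eigenvectorUnitary : Matrix (Fin n) (Fin n) ℂ) *
      star (hA.eigenvectorUnitary : Matrix (Fin n) (Fin n) ℂ) = 1 :=
    Matrix.mem_unitaryGroup_iff.mp hA.eigenvectorUnitary.2
  have h1 : Matrix.diagonal (fun i => ((hA.eigenvalues i - t : ℝ) : ℂ)) =
      Matrix.diagonal (RCLike.ofReal ∘ hA.eigenvalues) - (t:ℂ) • 1 := by
    ext i j
    by_cases hij : i = j <;>
      simp [hij, Matrix.diagonal_apply, Matrix.one_apply, Complex.ofReal_sub]
  have key : A - (t : ℂ) • 1 =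
      (hA.eigenvectorUnitary : Matrix (Fin n) (Fin n) ℂ) *
        Matrix.diagonal (fun i => ((hA.eigenvalues i - t : ℝ) : ℂ)) *
        star (hA.eigenvectorUnitary : Matrix (Fin n) (Fin n) ℂ) := by
    rw [h1, Matrix.mul_sub, Matrix.sub_mul, Matrix.mul_smul, Matrix.smul_mul, Matrix.mul_one, hU]
    conv_lhs => rw [hA.spectral_theorem]
    rfl
  rw [key]
  exact (Matrix.PosSemidef.diagonal (fun i =>
    Complex.zero_le_real.2 (by linarith [h i]))).mul_mul_conjTranspose_same _

private lemma shift_psd_right {n : ℕ} {A : Matrix (Fin n) (Fin n) ℂ} (hA : A.IsHermitian) {t : ℝ}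
    (h : ∀ i, hA.eigenvalues i ≤ t) : ((t : ℂ) • 1 - A).PosSemidef := by
  classical
  have hU : (hA.eigenvectorUnitary : Matrix (Fin n) (Fin n) ℂ) *
      star (hA.eigenvectorUnitary : Matrix (Fin n) (Fin n) ℂ) = 1 :=
    Matrix.mem_unitaryGroup_iff.mp hA.eigenvectorUnitary.2
  have h1 : Matrix.diagonal (fun i => ((t - hA.eigenvalues i : ℝ) : ℂ)) =
      (t:ℂ) • 1 - Matrix.diagonal (RCLike.ofReal ∘ hA.eigenvalues) := by
    ext i j
    by_cases hij : i = j <;>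
      simp [hij, Matrix.diagonal_apply, Matrix.one_apply, Complex.ofReal_sub]
  have key : (t : ℂ) • 1 - A =
      (hA.eigenvectorUnitary : Matrix (Fin n) (Fin n) ℂ) *
        Matrix.diagonal (fun i => ((t - hA.eigenvalues i : ℝ) : ℂ)) *
        star (hA.eigenvectorUnitary : Matrix (Fin n) (Fin n) ℂ) := by
    rw [h1, Matrix.mul_sub, Matrix.sub_mul, Matrix.mul_smul, Matrix.smul_mul, Matrix.mul_one, hU]
    conv_lhs => rw [hA.spectral_theorem]
    rfl
  rw [key]
  exact (Matrix.PosSemidef.diagonal (fun i =>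
    Complex.zero_le_real.2 (by linarith [h i]))).mul_mul_conjTranspose_same _

private lemma eigenvalue_gershgorin {n : ℕ} {A : Matrix (Fin n) (Fin n) ℂ}
    (hA : A.IsHermitian) (i : Fin n) :
    ∃ k, hA.eigenvalues i ≤ (A k k).re + ∑ j ∈ Finset.univ.erase k, ‖A k j‖ := by
  classical
  have hv : Module.End.HasEigenvalue (Matrix.toLin' A) ((hA.eigenvalues i : ℂ)) := by
    apply Module.End.hasEigenvalue_of_hasEigenvector (x := ⇑(hA.eigenvectorBasis i))
    constructor
    · rw [Module.End.mem_eigenspace_iff, Matrix.toLin'_apply, hA.mulVec_eigenvectorBasis]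
      ext j; simp [Complex.real_smul]
    · intro h
      exact hA.eigenvectorBasis.orthonormal.ne_zero i (by ext j; exact congrFun h j)
  obtain ⟨k, hk⟩ := eigenvalue_mem_ball hv
  refine ⟨k, ?_⟩
  rw [Metric.mem_closedBall, dist_eq_norm] at hk
  have h2 : hA.eigenvalues i - (A k k).re ≤ ‖(hA.eigenvalues i : ℂ) - A k k‖ := by
    calc hA.eigenvalues i - (A k k).re = ((hA.eigenvalues i : ℂ) - A k k).re := by simp
    _ ≤ _ := Complex.re_le_norm _
  have h3 : ‖(hA.eigenvalues i : ℂ) - A k k‖ = ‖(hA.eigenvalues i : ℂ) - A k k‖ := rfl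
  have h4 : ∑ j ∈ Finset.univ.erase k, ‖A k j‖ =
      ∑ j ∈ Finset.univ.erase k, ‖A k j‖ := rfl
  rw [h3, h4] at hk
  linarith
/-- For an `n × n` complex Hermitian matrix `A` that is not a scalar
multiple of the identity, with increasing diagonal and sorted eigenvalues `μ`,
one has `λ₁(A) ≤ a₁₁ - q₁ / (maxᵢ (aᵢᵢ + rᵢ) - a₁₁)`, and the denominator is
strictly positive. -/
theorem smallest_eigenvalue_schur_refinement
    {n : ℕ} (hn : 0 < n) (A : Matrix (Fin n) (Fin n) ℂ) (hA : A.IsHermitian)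
    (hdiag : Monotone fun i : Fin n => (A i i).re)
    (hns : ¬ ∃ c : ℂ, A = c • (1 : Matrix (Fin n) (Fin n) ℂ))
    (μ : Fin n → ℝ) (hμ : ∃ σ : Equiv.Perm (Fin n), μ = hA.eigenvalues ∘ σ)
    (hmono : Monotone μ)
    (r : Fin n → ℝ)
    (hr : ∀ i, r i = ∑ j ∈ Finset.univ.erase i, ‖A i j‖)
    (q₁ : ℝ)
    (hq : q₁ = ∑ j ∈ Finset.univ.erase (⟨0, hn⟩ : Fin n),
      ‖A ⟨0, hn⟩ j‖ ^ 2)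
    (M : ℝ)
    (hM : M = Finset.univ.sup' ⟨(⟨0, hn⟩ : Fin n), Finset.mem_univ _⟩
      (fun i => (A i i).re + r i)) :
    0 < M - (A ⟨0, hn⟩ ⟨0, hn⟩).re ∧
    μ ⟨0, hn⟩ ≤ (A ⟨0, hn⟩ ⟨0, hn⟩).re - q₁ / (M - (A ⟨0, hn⟩ ⟨0, hn⟩).re) := by
  classical
  set i0 : Fin n := ⟨0, hn⟩ with hi0
  set a : ℝ := (A i0 i0).re with ha
  have hreal : ∀ i : Fin n, ((A i i).re : ℂ) = A i i := fun i => hA.coe_re_apply_self i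
  have hd0 : ∀ i, a ≤ (A i i).re := fun i => hdiag (Nat.zero_le _)
  have hrn : ∀ i, 0 ≤ r i := by
    intro i; rw [hr]
    exact Finset.sum_nonneg fun j _ => norm_nonneg _
  have hMax : ∀ i, (A i i).re + r i ≤ M := by
    intro i; rw [hM]
    exact Finset.le_sup' (fun i => (A i i).re + r i) (Finset.mem_univ i)
  have hpos : 0 < M - a := by
    by_cases hoff : ∀ i j, i ≠ j → A i j = 0
    · have hdiff : ∃ i, (A i i).re ≠ a := by
        by_contra hall
        push_neg at hall
        refine hns ⟨(a : ℂ), ?_⟩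
        ext i j
        by_cases hij : i = j
        · subst hij
          rw [← hreal i, hall i]
          simp [Matrix.one_apply]
        · simp [Matrix.one_apply, hij, hoff i j hij]
      obtain ⟨i, hi⟩ := hdiff
      have h1 : a < (A i i).re := lt_of_le_of_ne (hd0 i) (Ne.symm hi)
      have := hMax i
      have := hrn i
      linarith
    · push_neg at hoff
      obtain ⟨i, j, hij, hAij⟩ := hoff
      have h1 : ‖A i j‖ ≤ r i := by
        rw [hr]
        exact Finset.single_le_sum (fun k _ => norm_nonneg _)
          (Finset.mem_erase.2 ⟨Ne.symm hij, Finset.mem_univ _⟩)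
      have h2 : 0 < ‖A i j‖ := norm_pos_iff.mpr hAij
      have := hMax i
      have := hd0 i
      linarith
  refine ⟨hpos, ?_⟩
  set l : ℝ := μ i0 with hl
  have hev_lb : ∀ i, l ≤ hA.eigenvalues i := by
    obtain ⟨σ, hσ⟩ := hμ
    intro i
    have h1 : hA.eigenvalues i = μ (σ.symm i) := by rw [hσ]; simp
    rw [h1]
    exact hmono (Nat.zero_le _)
  have hev_ub : ∀ i, hA.eigenvalues i ≤ M := by
    intro i
    obtain ⟨k, hk⟩ := eigenvalue_gershgorin hA i
    calc hA.eigenvalues i ≤ (A k k).re + r k := by rw [hr]; exact hk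
    _ ≤ M := hMax k
  set B : Matrix (Fin n) (Fin n) ℂ := A - (l : ℂ) • 1 with hB_def
  have hB : B.PosSemidef := shift_psd_left hA hev_lb
  have hC : ((M : ℂ) • 1 - A).PosSemidef := shift_psd_right hA hev_ub
  set S : Matrix (Fin n) (Fin n) ℂ := CFC.sqrt B with hS_def
  have hSH : Sᴴ = S := (Matrix.nonneg_iff_posSemidef.mp (CFC.sqrt_nonneg B)).1
  have hSS : S * S = B := CFC.sqrt_mul_sqrt_self B hB.nonneg
  have hD : (Sᴴ * ((M : ℂ) • 1 - A) * S).PosSemidef := hC.conjTranspose_mul_mul_same S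
  have hDeq : Sᴴ * ((M : ℂ) • 1 - A) * S = ((M : ℂ) - (l : ℂ)) • B - B * B := by
    have hA' : A = S * S + (l : ℂ) • 1 := by rw [hSS, hB_def]; abel
    rw [hSH, hA', ← hSS]
    simp only [Matrix.mul_sub, Matrix.sub_mul, Matrix.mul_add, Matrix.add_mul,
      Matrix.mul_smul, Matrix.smul_mul, Matrix.mul_one, Matrix.one_mul, sub_smul, smul_sub,
      mul_assoc]
    abel
  rw [hDeq] at hD
  have h0 := hD.re_dotProduct_nonneg (Pi.single i0 1)
  rw [diag_entry_eval] at h0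
  simp only [RCLike.re_to_complex] at h0
  -- entries of B
  have hBd : ∀ j, j ≠ i0 → B i0 j = A i0 j := by
    intro j hj
    simp [hB_def, Matrix.sub_apply, Matrix.one_apply, Ne.symm hj]
  have hB00 : B i0 i0 = ((a - l : ℝ) : ℂ) := by
    rw [hB_def]
    simp only [Matrix.sub_apply, Matrix.smul_apply, Matrix.one_apply_eq, smul_eq_mul, mul_one]
    rw [← hreal i0]
    push_cast
    ring
  have hBB : ((B * B) i0 i0).re = (a - l) ^ 2 + q₁ := by
    have h1 : (B * B) i0 i0 = ∑ j, ((Complex.normSq (B i0 j) : ℝ) : ℂ) := by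
      rw [Matrix.mul_apply]
      refine Finset.sum_congr rfl fun j _ => ?_
      have hji : B j i0 = (starRingEnd ℂ) (B i0 j) := by
        conv_lhs => rw [← hB.1]
        rfl
      rw [hji, Complex.mul_conj]
    have h2 : ((B * B) i0 i0).re = ∑ j, Complex.normSq (B i0 j) := by
      rw [h1, ← Complex.ofReal_sum]
      exact Complex.ofReal_re _
    rw [h2, ← Finset.add_sum_erase _ _ (Finset.mem_univ i0)]
    congr 1
    · rw [hB00, Complex.normSq_ofReal]; ring
    · rw [hq]
      refine Finset.sum_congr rfl fun j hj => ?_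
      rw [hBd j (Finset.ne_of_mem_erase hj), Complex.sq_norm]
  have hX : ((((M : ℂ) - (l : ℂ)) • B - B * B) i0 i0).re
      = (M - l) * (a - l) - ((a - l) ^ 2 + q₁) := by
    rw [Matrix.sub_apply, Complex.sub_re, hBB, Matrix.smul_apply, smul_eq_mul, hB00]
    have : ((M : ℂ) - (l : ℂ)) * ((a - l : ℝ) : ℂ) = (((M - l) * (a - l) : ℝ) : ℂ) := by
      push_cast; ring
    rw [this, Complex.ofReal_re]
  rw [hX] at h0
  have hkey : q₁ ≤ (a - l) * (M - a) := by nlinarith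
  have hdiv : q₁ / (M - a) ≤ a - l := (div_le_iff₀ hpos).2 hkey
  linarith
end

section
/- Let A be an n×n complex Hermitian matrix that is not a scalar multiple of the identity, with diagonal entries ordered so that a_{11} ≤ a_{22} ≤ ... ≤ a_{nn}. Let λ_n(A) denote the largest eigenvalue of A, let q_n = Σ_{j≠n} |a_{nj}|², and for each i let r_i = Σ_{j≠i} |a_{ij}|. Then λ_n(A) ≥ a_{nn} + q_n / (a_{nn} − min_i (a_{ii} − r_i)), where the denominator a_{nn} − min_i (a_{ii} − r_i) is strictly positive. -/
open Matrix

open Matrix in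
lemma rayleigh_aux {n : ℕ} (A : Matrix (Fin n) (Fin n) ℂ) (hA : A.IsHermitian)
    (lo hi : ℝ) (hlo : ∀ k, lo ≤ hA.eigenvalues k) (hhi : ∀ k, hA.eigenvalues k ≤ hi)
    (x : Fin n → ℂ) :
    lo * (star x ⬝ᵥ x).re ≤ (star x ⬝ᵥ A *ᵥ x).re ∧
      (star x ⬝ᵥ A *ᵥ x).re ≤ hi * (star x ⬝ᵥ x).re := by
  set U := (hA.eigenvectorUnitary : Matrix (Fin n) (Fin n) ℂ) with hU
  set y := (star U) *ᵥ x with hy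
  have hstary : star y = star x ᵥ* U := by
    rw [hy, star_mulVec, Matrix.star_eq_conjTranspose, conjTranspose_conjTranspose]
  have hform : star x ⬝ᵥ A *ᵥ x
      = ∑ k, (hA.eigenvalues k) * Complex.normSq (y k) := by
    conv_lhs => rw [hA.spectral_theorem, Unitary.conjStarAlgAut_apply]
    rw [← mulVec_mulVec, ← mulVec_mulVec, dotProduct_mulVec, ← hstary]
    rw [show (Matrix.diagonal (RCLike.ofReal ∘ hA.eigenvalues) : Matrix (Fin n) (Fin n) ℂ) *ᵥ y
        = fun k => (hA.eigenvalues k : ℂ) * y k from funext fun k => mulVec_diagonal _ _ _]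
    rw [dotProduct]
    push_cast
    congr 1
    ext k
    simp only [Pi.star_apply]
    rw [Complex.star_def,
      show (starRingEnd ℂ) (y k) * ((hA.eigenvalues k : ℂ) * y k)
        = (hA.eigenvalues k : ℂ) * (y k * (starRingEnd ℂ) (y k)) by ring,
      Complex.mul_conj]
  have hnorm : star x ⬝ᵥ x = ∑ k, (Complex.normSq (y k) : ℂ) := by
    have h1 : star x ⬝ᵥ x = star y ⬝ᵥ y := by
      rw [hstary, hy, ← dotProduct_mulVec, mulVec_mulVec,
        (Matrix.mem_unitaryGroup_iff).mp hA.eigenvectorUnitary.2, one_mulVec]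
    rw [h1, dotProduct]
    congr 1
    ext k
    simp only [Pi.star_apply]
    rw [Complex.star_def, mul_comm, Complex.mul_conj]
  have hre : (star x ⬝ᵥ A *ᵥ x).re = ∑ k, hA.eigenvalues k * Complex.normSq (y k) := by
    rw [hform]
    push_cast
    rw [Complex.re_sum]
    simp
  have hre2 : (star x ⬝ᵥ x).re = ∑ k, Complex.normSq (y k) := by
    rw [hnorm, Complex.re_sum]
    simp
  rw [hre, hre2]
  constructor
  · rw [Finset.mul_sum]
    exact Finset.sum_le_sum fun k _ =>
      mul_le_mul_of_nonneg_right (hlo k) (Complex.normSq_nonneg _)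
  · rw [Finset.mul_sum]
    exact Finset.sum_le_sum fun k _ =>
      mul_le_mul_of_nonneg_right (hhi k) (Complex.normSq_nonneg _)


lemma real_algebra_aux (a m q c L' : ℝ) (hpos : 0 < a - m) (hq0 : 0 ≤ q)
    (hU : ∀ t : ℝ, a + 2*t*q + t^2*c ≤ L' * (1 + t^2*q))
    (hLo : ∀ t : ℝ, m * (1 + t^2*q) ≤ a + 2*t*q + t^2*c) :
    L' ≥ a + q / (a - m) := by
  rcases eq_or_lt_of_le hq0 with h0 | hq
  · have h := hU 0
    norm_num at h
    rw [← h0, zero_div, add_zero]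
    exact h
  · have hqne : q ≠ 0 := ne_of_gt hq
    obtain ⟨b, hb⟩ : ∃ b, c = b * q := ⟨c / q, (div_mul_cancel₀ c hqne).symm⟩
    obtain ⟨s, hs0, hs2⟩ : ∃ s, 0 ≤ s ∧ s^2 = ((a-b)/2)^2 + q :=
      ⟨Real.sqrt (((a-b)/2)^2 + q), Real.sqrt_nonneg _, Real.sq_sqrt (by positivity)⟩
    obtain ⟨L, hL⟩ : ∃ L : ℝ, L = (a+b)/2 + s := ⟨_, rfl⟩
    obtain ⟨l, hl⟩ : ∃ l : ℝ, l = (a+b)/2 - s := ⟨_, rfl⟩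
    have hLa : 0 < L - a := by
      rw [hL]; nlinarith [sq_nonneg (s - (a-b)/2), sq_nonneg (s + (a-b)/2)]
    have hLq : (L - a) * (L - b) = q := by rw [hL]; linear_combination hs2
    have hlq : (l - a) * (l - b) = q := by rw [hl]; linear_combination hs2
    have hal : a - l = L - b := by rw [hl, hL]; ring
    have hA1 : L ≤ L' := by
      have h := hU ((L - a)/q)
      have heq : a + 2*((L-a)/q)*q + ((L-a)/q)^2*c = L * (1 + ((L-a)/q)^2*q) := by
        rw [hb]
        field_simp
        linear_combination (-(L-a)) * hLq
      rw [heq] at h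
      have hden : 0 < 1 + ((L-a)/q)^2*q := by positivity
      exact le_of_mul_le_mul_right h hden
    have hB1 : m ≤ l := by
      have h := hLo ((l - a)/q)
      have heq : a + 2*((l-a)/q)*q + ((l-a)/q)^2*c = l * (1 + ((l-a)/q)^2*q) := by
        rw [hb]
        field_simp
        linear_combination (-(l-a)) * hlq
      rw [heq] at h
      have hden : 0 < 1 + ((l-a)/q)^2*q := by positivity
      exact le_of_mul_le_mul_right h hden
    have h1 : q / (a - m) ≤ L - a := by
      rw [div_le_iff₀ hpos]
      have h2 : (L - a) * (a - l) = q := by rw [hal]; exact hLq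
      nlinarith
    linarith





/-- For an `n × n` complex Hermitian matrix `A` that is not a scalar
multiple of the identity, with increasing diagonal and sorted eigenvalues `μ`,
one has `λₙ(A) ≥ aₙₙ + qₙ / (aₙₙ - minᵢ (aᵢᵢ - rᵢ))`, and the denominator is
strictly positive. -/
theorem largest_eigenvalue_schur_refinement
    {n : ℕ} (hn : 0 < n) (A : Matrix (Fin n) (Fin n) ℂ) (hA : A.IsHermitian)
    (hdiag : Monotone fun i : Fin n => (A i i).re)
    (hns : ¬ ∃ c : ℂ, A = c • (1 : Matrix (Fin n) (Fin n) ℂ))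
    (μ : Fin n → ℝ) (hμ : ∃ σ : Equiv.Perm (Fin n), μ = hA.eigenvalues ∘ σ)
    (hmono : Monotone μ)
    (r : Fin n → ℝ)
    (hr : ∀ i, r i = ∑ j ∈ Finset.univ.erase i, ‖A i j‖)
    (qₙ : ℝ)
    (hq : qₙ = ∑ j ∈ Finset.univ.erase (⟨n - 1, by omega⟩ : Fin n),
      ‖A ⟨n - 1, by omega⟩ j‖ ^ 2)
    (m : ℝ)
    (hm : m = Finset.univ.inf' ⟨(⟨0, hn⟩ : Fin n), Finset.mem_univ _⟩
      (fun i => (A i i).re - r i)) :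
    0 < (A ⟨n - 1, by omega⟩ ⟨n - 1, by omega⟩).re - m ∧
    μ ⟨n - 1, by omega⟩ ≥ (A ⟨n - 1, by omega⟩ ⟨n - 1, by omega⟩).re +
      qₙ / ((A ⟨n - 1, by omega⟩ ⟨n - 1, by omega⟩).re - m) := by
  have hn1 : n - 1 < n := by omega
  set N : Fin n := ⟨n - 1, hn1⟩ with hN
  have htop : ∀ i : Fin n, i ≤ N := fun i => by
    rw [Fin.le_def]; exact Nat.le_sub_one_of_lt i.2
  set a := (A N N).re with ha
  have hsym : ∀ i j, A i j = (starRingEnd ℂ) (A j i) := by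
    intro i j
    rw [← congrFun (congrFun hA.eq i) j, Matrix.conjTranspose_apply, Complex.star_def]
  have hrnn : ∀ i, 0 ≤ r i := fun i =>
    (hr i) ▸ Finset.sum_nonneg fun j _ => norm_nonneg _
  have hmle : ∀ i, m ≤ (A i i).re - r i := fun i => hm ▸ Finset.inf'_le _ (Finset.mem_univ i)
  have hpos : 0 < a - m := by
    by_contra hcon
    push_neg at hcon
    have ham : a ≤ m := by linarith
    apply hns
    refine ⟨(a : ℂ), ?_⟩
    have key : ∀ i, r i = 0 ∧ (A i i).re = a := by
      intro i
      have h1 : (A i i).re ≤ a := hdiag (htop i)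
      have h2 := hmle i
      constructor <;> linarith [hrnn i]
    ext i j
    by_cases hij : i = j
    · subst hij
      have him : (A i i).im = 0 := by
        have h := congrArg Complex.im (hsym i i)
        simp at h
        linarith
      have hii : A i i = (a : ℂ) := Complex.ext (by simp [(key i).2]) (by simp [him])
      rw [hii]
      simp [Matrix.one_apply]
    · have h0 : ‖A i j‖ = 0 := by
        have hsum := (key i).1
        rw [hr i] at hsum
        exact (Finset.sum_eq_zero_iff_of_nonneg
          (fun k _ => norm_nonneg _)).mp hsum j
          (Finset.mem_erase.mpr ⟨Ne.symm hij, Finset.mem_univ j⟩)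
      rw [norm_eq_zero] at h0
      simp [Matrix.one_apply, hij, h0]
  refine ⟨hpos, ?_⟩
  -- eigenvalue bounds
  have hmax : ∀ k, hA.eigenvalues k ≤ μ N := by
    obtain ⟨σ, hσ⟩ := hμ
    intro k
    have h1 : hA.eigenvalues k = μ (σ.symm k) := by rw [hσ]; simp
    rw [h1]; exact hmono (htop _)
  have hmin : ∀ k, m ≤ hA.eigenvalues k := by
    intro k
    have hnz : ⇑(hA.eigenvectorBasis k) ≠ 0 := by
      intro h0
      have h1 := hA.eigenvectorBasis.orthonormal.1 k
      have h2 : hA.eigenvectorBasis k = 0 := by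
        ext j; exact congrFun h0 j
      rw [h2, norm_zero] at h1
      norm_num at h1
    have hev : Module.End.HasEigenvalue (Matrix.toLin' A) ((hA.eigenvalues k : ℂ)) := by
      apply Module.End.hasEigenvalue_of_hasEigenvector (x := ⇑(hA.eigenvectorBasis k))
      refine ⟨Module.End.mem_eigenspace_iff.mpr ?_, hnz⟩
      rw [Matrix.toLin'_apply, hA.mulVec_eigenvectorBasis]
      ext j
      simp [Complex.real_smul]
    obtain ⟨i, hi⟩ := eigenvalue_mem_ball hev
    rw [Metric.mem_closedBall, Complex.dist_eq] at hi
    have h4 : ∑ j ∈ Finset.univ.erase i, ‖A i j‖ = r i := by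
      rw [hr i]
    rw [h4] at hi
    have h3 := Complex.abs_re_le_norm ((hA.eigenvalues k : ℂ) - A i i)
    have h5 : ((hA.eigenvalues k : ℂ) - A i i).re = hA.eigenvalues k - (A i i).re := by simp
    rw [h5] at h3
    have := hmle i
    cases abs_le.mp (le_trans h3 hi) with
    | intro hlow hhigh => linarith
  -- vectors
  set e : Fin n → ℂ := fun j => if j = N then 1 else 0 with he
  set w : Fin n → ℂ := fun j => if j = N then 0 else (starRingEnd ℂ) (A N j) with hw
  have hq0 : 0 ≤ qₙ := hq ▸ Finset.sum_nonneg fun j _ => sq_nonneg _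
  have hqC : (qₙ : ℂ) = ∑ j ∈ Finset.univ.erase N, A N j * (starRingEnd ℂ) (A N j) := by
    rw [hq]
    push_cast
    refine Finset.sum_congr rfl fun j _ => ?_
    rw [← Complex.ofReal_pow, Complex.sq_norm]
    exact (Complex.mul_conj _).symm
  have hdote : ∀ v : Fin n → ℂ, star e ⬝ᵥ v = v N := by
    intro v
    simp [dotProduct, he, Pi.star_apply, apply_ite (star : ℂ → ℂ), ite_mul,
      Finset.sum_ite_eq']
  have hsumw : ∀ f : Fin n → ℂ, (∑ i, if i = N then 0 else A N i * (starRingEnd ℂ) (A N i)) = (qₙ : ℂ) := by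
    intro _
    calc (∑ i, if i = N then 0 else A N i * (starRingEnd ℂ) (A N i))
        = ∑ i ∈ Finset.univ.erase N, (if i = N then 0 else A N i * (starRingEnd ℂ) (A N i)) :=
          (Finset.sum_erase _ (by simp)).symm
      _ = ∑ i ∈ Finset.univ.erase N, A N i * (starRingEnd ℂ) (A N i) :=
          Finset.sum_congr rfl fun i hi => if_neg (Finset.mem_erase.mp hi).1
      _ = (qₙ : ℂ) := hqC.symm
  have hE1 : star e ⬝ᵥ (A *ᵥ e) = A N N := by
    rw [hdote]
    simp [Matrix.mulVec, dotProduct, he, mul_ite, Finset.sum_ite_eq']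
  have hE2 : star e ⬝ᵥ (A *ᵥ w) = (qₙ : ℂ) := by
    rw [hdote]
    rw [show (A *ᵥ w) N = ∑ j, A N j * w j from rfl]
    rw [← hsumw w]
    refine Finset.sum_congr rfl fun j _ => ?_
    by_cases hj : j = N <;> simp [hw, hj]
  have hE3 : star w ⬝ᵥ (A *ᵥ e) = (qₙ : ℂ) := by
    rw [dotProduct, ← hsumw w]
    refine Finset.sum_congr rfl fun i _ => ?_
    have hAiN : (A *ᵥ e) i = A i N := by
      simp [Matrix.mulVec, dotProduct, he, mul_ite, Finset.sum_ite_eq']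
    rw [hAiN, hsym i N]
    by_cases hi : i = N <;> simp [hw, hi]
  have hSe : star e ⬝ᵥ e = 1 := by rw [hdote]; simp [he]
  have hSew : star e ⬝ᵥ w = 0 := by rw [hdote]; simp [hw]
  have hSwe : star w ⬝ᵥ e = 0 := by
    rw [dotProduct]
    refine Finset.sum_eq_zero fun i _ => ?_
    by_cases hi : i = N <;> simp [hw, he, hi]
  have hSw : star w ⬝ᵥ w = (qₙ : ℂ) := by
    rw [dotProduct, ← hsumw w]
    refine Finset.sum_congr rfl fun i _ => ?_
    by_cases hi : i = N <;> simp [hw, hi, mul_comm]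
  set W := (star w ⬝ᵥ (A *ᵥ w)).re with hW
  have hstx : ∀ t : ℝ, star (e + (t:ℂ) • w) = star e + (t:ℂ) • star w := by
    intro t
    rw [star_add, star_smul]
    congr 1
    simp [Complex.star_def, Complex.conj_ofReal]
  have hxform : ∀ t : ℝ, (star (e + (t:ℂ) • w) ⬝ᵥ (A *ᵥ (e + (t:ℂ) • w))).re
      = a + 2*t*qₙ + t^2 * W := by
    intro t
    rw [hstx t, Matrix.mulVec_add, Matrix.mulVec_smul]
    simp only [add_dotProduct, dotProduct_add, smul_dotProduct,
      dotProduct_smul]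
    rw [hE1, hE2, hE3]
    simp only [smul_eq_mul]
    have hANN : A N N = (a : ℂ) := by
      have him : (A N N).im = 0 := by
        have h := congrArg Complex.im (hsym N N)
        simp at h
        linarith
      exact Complex.ext rfl (by simp [him])
    rw [hANN,
      show (a:ℂ) + (t:ℂ) * (qₙ:ℂ) + (t:ℂ) * ((qₙ:ℂ) + (t:ℂ) * (star w ⬝ᵥ (A *ᵥ w)))
        = ((a + 2*t*qₙ : ℝ) : ℂ) + ((t^2 : ℝ) : ℂ) * (star w ⬝ᵥ (A *ᵥ w)) by push_cast; ring]
    rw [Complex.add_re, Complex.ofReal_re, Complex.re_ofReal_mul, ← hW]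
  have hxnorm : ∀ t : ℝ, (star (e + (t:ℂ) • w) ⬝ᵥ (e + (t:ℂ) • w)).re = 1 + t^2 * qₙ := by
    intro t
    rw [hstx t]
    simp only [add_dotProduct, dotProduct_add, smul_dotProduct,
      dotProduct_smul]
    rw [hSe, hSew, hSwe, hSw]
    simp only [smul_eq_mul]
    rw [show (1:ℂ) + (t:ℂ) * 0 + (t:ℂ) * (0 + (t:ℂ) * (qₙ:ℂ))
        = ((1 + t^2*qₙ : ℝ) : ℂ) by push_cast; ring]
    exact Complex.ofReal_re _
  have hU : ∀ t : ℝ, a + 2*t*qₙ + t^2*W ≤ (μ N) * (1 + t^2*qₙ) := by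
    intro t
    have h := (rayleigh_aux A hA m (μ N) hmin hmax (e + (t:ℂ) • w)).2
    rw [hxform t, hxnorm t] at h
    exact h
  have hLo : ∀ t : ℝ, m * (1 + t^2*qₙ) ≤ a + 2*t*qₙ + t^2*W := by
    intro t
    have h := (rayleigh_aux A hA m (μ N) hmin hmax (e + (t:ℂ) • w)).1
    rw [hxform t, hxnorm t] at h
    exact h
  exact real_algebra_aux a m qₙ W (μ N) hpos hq0 hU hLo
end

section
/- Let A be an n×n complex Hermitian matrix with diagonal entries ordered so that a_{11} ≤ a_{22} ≤ ... ≤ a_{nn}, and let its eigenvalues be enumerated in increasing order λ_1(A) ≤ ... ≤ λ_n(A). Fix integers r and t with 1 ≤ r ≤ n−1 and r < t ≤ n. Assume the denominator D = a_{tt} − min_{i ∈ {1,...,r,t}} ( a_{ii} − Σ_{s=1, s≠i}^{r+1} |a_{is}| ) is strictly positive (here, for the index i = t, the inner sum runs over the off-diagonal entries of the (r+1)×(r+1) principal submatrix of A with rows and columns indexed by {1,...,r,t}). Then Σ_{i=1}^{r} λ_i(A) ≤ Σ_{i=1}^{r} a_{ii} − ( Σ_{s=1}^{r} |a_{ts}|²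 ) / D. -/
lemma aux_sum_fin {α : Type*} [LinearOrder α] {M : Type*} [AddCommMonoid M] (s : Finset α)
    {m : ℕ} (h : s.card = m) (g : α → M) :
    ∑ k : Fin m, g (s.orderIsoOfFin h k) = ∑ i ∈ s, g i := by
  rw [← Finset.sum_coe_sort s g]
  exact Equiv.sum_comp (s.orderIsoOfFin h).toEquiv (fun x : s => g x)
section AuxHermitian

open Finset in
lemma aux_rearrange {n r : ℕ} (hr : r < n) (μ : Fin n → ℝ) (hmono : Monotone μ)
    (q : Fin n → ℝ) (hq0 : ∀ j, 0 ≤ q j) (hq1 : ∀ j, q j ≤ 1)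
    (hqs : ∑ j, q j = r) :
    ∑ j ∈ Finset.univ.filter (fun j : Fin n => (j : ℕ) < r), μ j ≤ ∑ j, μ j * q j := by
  set c : ℝ := μ ⟨r, hr⟩ with hc
  have key : ∀ j : Fin n, 0 ≤ (μ j - c) * (q j - if (j : ℕ) < r then 1 else 0) := by
    intro j
    by_cases h : (j : ℕ) < r
    · simp only [h, if_true]
      have h1 : μ j ≤ c := hmono (by exact Fin.le_def.mpr (le_of_lt h))
      have h2 : q j - 1 ≤ 0 := by linarith [hq1 j]
      nlinarith
    · simp only [h, if_false]
      have h1 : c ≤ μ j := hmono (by exact Fin.le_def.mpr (not_lt.mp h))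
      nlinarith [hq0 j]
  have hsum : (0:ℝ) ≤ ∑ j, (μ j - c) * (q j - if (j : ℕ) < r then 1 else 0) :=
    Finset.sum_nonneg fun j _ => key j
  have hcard : (Finset.univ.filter fun i : Fin n => (i : ℕ) < r).card = r := by
    have : (Finset.univ.filter fun i : Fin n => (i : ℕ) < r) = Finset.Iio (⟨r, hr⟩ : Fin n) := by
      ext i; simp [Fin.lt_def]
    rw [this, Fin.card_Iio]
  have hchi : ∑ j : Fin n, (if (j : ℕ) < r then (1:ℝ) else 0) = r := by
    rw [← Finset.sum_filter]
    simp [hcard]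
  have hfil : ∑ j ∈ Finset.univ.filter (fun j : Fin n => (j : ℕ) < r), μ j
      = ∑ j : Fin n, μ j * (if (j : ℕ) < r then 1 else 0) := by
    rw [Finset.sum_filter]; congr 1; ext j; split <;> simp
  have expand : ∑ j, (μ j - c) * (q j - if (j : ℕ) < r then 1 else 0)
      = ∑ j, μ j * q j - ∑ j, μ j * (if (j : ℕ) < r then 1 else 0)
        - c * (∑ j, q j) + c * ∑ j : Fin n, (if (j : ℕ) < r then (1:ℝ) else 0) := by
    rw [Finset.mul_sum, Finset.mul_sum, ← Finset.sum_sub_distrib, ← Finset.sum_sub_distrib,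
      ← Finset.sum_add_distrib]
    congr 1; ext j; ring
  rw [expand, hqs, hchi] at hsum
  rw [hfil]; linarith

lemma aux_row_bound {n m : ℕ} (M : Matrix (Fin n) (Fin m) ℂ)
    (hM : M.conjTranspose * M = 1) (j : Fin n) :
    ∑ k, Complex.normSq (M j k) ≤ 1 := by
  set P : Matrix (Fin n) (Fin n) ℂ := M * M.conjTranspose with hP
  have hPP : P * P = P := by
    rw [hP, Matrix.mul_assoc, ← Matrix.mul_assoc M.conjTranspose, hM, Matrix.one_mul]
  have hPH : P.conjTranspose = P := by
    rw [hP, Matrix.conjTranspose_mul, Matrix.conjTranspose_conjTranspose]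
  set p : ℝ := ∑ k, Complex.normSq (M j k) with hp
  have hPjj : P j j = (p : ℂ) := by
    rw [hP, hp]
    push_cast
    simp [Matrix.mul_apply, Matrix.conjTranspose_apply, Complex.mul_conj]
  have h2 : ∀ l, P l j = starRingEnd ℂ (P j l) := by
    intro l
    conv_lhs => rw [← hPH]
    simp [Matrix.conjTranspose_apply]
  have key : p = ∑ l, Complex.normSq (P j l) := by
    have h1 := congrArg (fun X : Matrix (Fin n) (Fin n) ℂ => X j j) hPP
    simp only [Matrix.mul_apply] at h1
    rw [hPjj] at h1
    have h3 : ∑ l, (Complex.normSq (P j l) : ℂ) = (p:ℂ) := by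
      rw [← h1]; congr 1; ext l; rw [h2 l, Complex.mul_conj]
    have h4 := congrArg Complex.re h3
    push_cast at h4
    simpa using h4.symm
  have hge : Complex.normSq (P j j) ≤ p := by
    rw [key]
    exact Finset.single_le_sum (fun l _ => Complex.normSq_nonneg _) (Finset.mem_univ j)
  rw [hPjj] at hge
  simp only [Complex.normSq_ofReal] at hge
  have hp0 : 0 ≤ p := Finset.sum_nonneg fun k _ => Complex.normSq_nonneg _
  nlinarith

variable {m : ℕ} {B : Matrix (Fin m) (Fin m) ℂ} (hB : B.IsHermitian)

local notation "U" => (hB.eigenvectorUnitary : Matrix (Fin m) (Fin m) ℂ)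
local notation "ν" => hB.eigenvalues

lemma aux_UUstar : (hB.eigenvectorUnitary : Matrix (Fin m) (Fin m) ℂ)
    * star (hB.eigenvectorUnitary : Matrix (Fin m) (Fin m) ℂ) = 1 :=
  Matrix.mem_unitaryGroup_iff.mp hB.eigenvectorUnitary.2

lemma aux_UstarU : star (hB.eigenvectorUnitary : Matrix (Fin m) (Fin m) ℂ)
    * (hB.eigenvectorUnitary : Matrix (Fin m) (Fin m) ℂ) = 1 :=
  Matrix.mem_unitaryGroup_iff'.mp hB.eigenvectorUnitary.2

lemma aux_sumsq_U (i : Fin m) : ∑ k, Complex.normSq (U i k) = 1 := by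
  have h := congrArg (fun X : Matrix (Fin m) (Fin m) ℂ => X i i) (aux_UUstar hB)
  simp only [Matrix.mul_apply, Matrix.star_apply, Matrix.one_apply_eq] at h
  have h2 : ∑ k, (Complex.normSq (U i k) : ℂ) = 1 := by
    rw [← h]; congr 1; ext k; rw [← Complex.mul_conj]; rfl
  have h3 := congrArg Complex.re h2
  push_cast at h3
  simpa using h3

lemma aux_diag_moment1 (i : Fin m) : (B i i).re = ∑ k, ν k * Complex.normSq (U i k) := by
  have h := congrArg (fun X : Matrix (Fin m) (Fin m) ℂ => X i i) hB.spectral_theorem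
  simp only [Matrix.mul_apply, Matrix.diagonal_apply, Function.comp_apply, mul_ite, mul_zero,
    Finset.sum_ite_eq, Finset.sum_ite_eq', Finset.mem_univ, if_true, Matrix.star_apply,
    Unitary.conjStarAlgAut_apply] at h
  have h2 : B i i = ∑ k, ((ν k * Complex.normSq (U i k) : ℝ) : ℂ) := by
    rw [h]; congr 1; ext k
    push_cast
    rw [← Complex.mul_conj]
    show U i k * (ν k : ℂ) * star (U i k) = (ν k : ℂ) * (U i k * star (U i k))
    ring
  have h3 := congrArg Complex.re h2
  push_cast at h3
  simpa using h3

lemma aux_sumsq_U_col (k : Fin m) : ∑ i, Complex.normSq (U i k) = 1 := by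
  have h := congrArg (fun X : Matrix (Fin m) (Fin m) ℂ => X k k) (aux_UstarU hB)
  simp only [Matrix.mul_apply, Matrix.star_apply, Matrix.one_apply_eq] at h
  have h2 : ∑ i, (Complex.normSq (U i k) : ℂ) = 1 := by
    rw [← h]; congr 1; ext i
    symm
    show (starRingEnd ℂ) (U i k) * U i k = _
    rw [mul_comm, Complex.mul_conj]
  have h3 := congrArg Complex.re h2
  push_cast at h3
  simpa using h3

lemma aux_trace : ∑ k, ν k = ∑ i, (B i i).re := by
  have : ∀ i, (B i i).re = ∑ k, ν k * Complex.normSq (U i k) := aux_diag_moment1 hB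
  rw [Finset.sum_congr rfl fun i _ => this i, Finset.sum_comm]
  congr 1; ext k
  rw [← Finset.mul_sum, aux_sumsq_U_col hB k, mul_one]

lemma aux_diag_moment2 (i : Fin m) :
    ∑ j, Complex.normSq (B i j) = ∑ k, (ν k)^2 * Complex.normSq (U i k) := by
  set d : Fin m → ℂ := RCLike.ofReal ∘ ν with hdd
  have hBB : B * B = U * Matrix.diagonal (fun k => d k * d k) * star U := by
    conv_lhs => rw [hB.spectral_theorem, Unitary.conjStarAlgAut_apply]
    rw [← Matrix.diagonal_mul_diagonal]
    rw [Matrix.mul_assoc (U * Matrix.diagonal d) (star U)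
      (U * Matrix.diagonal d * star U)]
    rw [← Matrix.mul_assoc (star U) (U * Matrix.diagonal d) (star U),
      ← Matrix.mul_assoc (star U) U (Matrix.diagonal d), aux_UstarU hB, Matrix.one_mul]
    rw [← Matrix.mul_assoc, ← Matrix.mul_assoc]
  have h := congrArg (fun X : Matrix (Fin m) (Fin m) ℂ => X i i) hBB
  simp only [Matrix.mul_apply, Matrix.diagonal_apply, mul_ite, mul_zero,
    Finset.sum_ite_eq, Finset.sum_ite_eq', Finset.mem_univ, if_true, Matrix.star_apply] at h
  have hleft : (∑ j, B i j * B j i) = ∑ j, (Complex.normSq (B i j) : ℂ) := by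
    congr 1; ext j
    rw [← hB.apply j i]
    show B i j * (starRingEnd ℂ) (B i j) = _
    rw [Complex.mul_conj]
  have hright : (∑ k, U i k * (d k * d k) * star (U i k))
      = ∑ k, (((ν k)^2 * Complex.normSq (U i k) : ℝ) : ℂ) := by
    congr 1; ext k
    push_cast
    rw [← Complex.mul_conj]
    show U i k * ((ν k : ℂ) * (ν k : ℂ)) * star (U i k) =
      (ν k : ℂ)^2 * (U i k * star (U i k))
    ring
  rw [hleft, hright, ← Complex.ofReal_sum, ← Complex.ofReal_sum] at h
  exact_mod_cast h

lemma aux_gersh (k : Fin m) :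
    ∃ i, (B i i).re - ∑ j ∈ Finset.univ.erase i, ‖B i j‖ ≤ ν k := by
  have hv := hB.mulVec_eigenvectorBasis k
  have hev : Module.End.HasEigenvalue (Matrix.toLin' B) ((ν k : ℂ)) := by
    apply Module.End.hasEigenvalue_of_hasEigenvector
      (x := ⇑(hB.eigenvectorBasis k))
    constructor
    · rw [Module.End.mem_eigenspace_iff, Matrix.toLin'_apply, hv]
      funext j
      simp [Complex.real_smul]
    · intro h0
      exact hB.eigenvectorBasis.orthonormal.ne_zero k (by ext j; exact congrFun h0 j)
  obtain ⟨i, hi⟩ := eigenvalue_mem_ball hev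
  refine ⟨i, ?_⟩
  rw [Metric.mem_closedBall, dist_eq_norm] at hi
  have h2 : (B i i).re - ν k ≤ ‖(ν k : ℂ) - B i i‖ := by
    have : (B i i).re - ν k = ((B i i) - (ν k : ℂ)).re := by simp
    rw [this, ← norm_sub_rev]
    exact (Complex.re_le_norm _)
  have h3 : ∑ j ∈ Finset.univ.erase i, ‖B i j‖ = ∑ j ∈ Finset.univ.erase i,
      ‖B i j‖ := rfl
  linarith [h3 ▸ hi]

end AuxHermitian

section MainProof

/-- For an `n × n` complex Hermitian matrix `A` with increasing diagonal
and sorted eigenvalues `μ`, and `1 ≤ r ≤ n - 1`, `r < t ≤ n` (here `t` is 0-indexed,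
so `r ≤ t < n`), if the denominator
`D = a_tt - min_{i ∈ S} (a_ii - Σ_{s ∈ S, s ≠ i} |a_is|)` (with `S = {1,…,r,t}`)
is strictly positive, then
`Σ_{i=1}^r λᵢ(A) ≤ Σ_{i=1}^r aᵢᵢ - (Σ_{s=1}^r |a_ts|²) / D`. -/
theorem partial_sum_eigenvalues_schur_refinement_quadratic
    {n : ℕ} (A : Matrix (Fin n) (Fin n) ℂ) (hA : A.IsHermitian)
    (hdiag : Monotone fun i : Fin n => (A i i).re)
    (μ : Fin n → ℝ) (hμ : ∃ σ : Equiv.Perm (Fin n), μ = hA.eigenvalues ∘ σ)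
    (hmono : Monotone μ)
    (r : ℕ) (hr1 : 1 ≤ r) (hrn : r ≤ n - 1)
    (t : Fin n) (ht : r ≤ (t : ℕ))
    (D : ℝ)
    (hD : D = (A t t).re -
      (insert t (Finset.univ.filter fun i : Fin n => (i : ℕ) < r)).inf'
        ⟨t, Finset.mem_insert_self t _⟩
        (fun i => (A i i).re -
          ∑ s ∈ (insert t (Finset.univ.filter fun i : Fin n => (i : ℕ) < r)).erase i,
            ‖A i s‖))
    (hDpos : 0 < D) :
    ∑ i ∈ Finset.univ.filter (fun i : Fin n => (i : ℕ) < r), μ i ≤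
      ∑ i ∈ Finset.univ.filter (fun i : Fin n => (i : ℕ) < r), (A i i).re -
        (∑ s ∈ Finset.univ.filter (fun s : Fin n => (s : ℕ) < r),
          ‖A t s‖ ^ 2) / D := by
  classical
  have hn0 : 0 < n := t.pos
  have hn : r < n := lt_of_le_of_lt hrn (Nat.sub_lt hn0 one_pos)
  set R : Finset (Fin n) := Finset.univ.filter (fun i : Fin n => (i : ℕ) < r) with hR
  have htR : t ∉ R := by simp [hR, not_lt.mpr ht]
  set S : Finset (Fin n) := insert t R with hS
  have hcardR : R.card = r := by
    have : R = Finset.Iio (⟨r, hn⟩ : Fin n) := by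
      ext i; simp [hR, Fin.lt_def]
    rw [this, Fin.card_Iio]
  have hcard : S.card = r + 1 := by
    rw [hS, Finset.card_insert_of_notMem htR, hcardR]
  set f : Fin (r+1) → Fin n := fun k => ((S.orderIsoOfFin hcard) k : Fin n) with hf
  have hfmem : ∀ k, f k ∈ S := fun k => ((S.orderIsoOfFin hcard) k).2
  have hfinj : Function.Injective f := fun a b hab => by
    have := (S.orderIsoOfFin hcard).injective (Subtype.ext hab)
    exact this
  have sumS : ∀ (g : Fin n → ℝ), ∑ k, g (f k) = ∑ i ∈ S, g i := fun g =>
    aux_sum_fin S hcard g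
  set t' : Fin (r+1) := (S.orderIsoOfFin hcard).symm ⟨t, Finset.mem_insert_self t R⟩ with ht'
  have hft' : f t' = t := by
    rw [hf, ht']
    exact congrArg Subtype.val ((S.orderIsoOfFin hcard).apply_symm_apply _)
  set B : Matrix (Fin (r+1)) (Fin (r+1)) ℂ := A.submatrix f f with hBdef
  have hB : B.IsHermitian := hA.submatrix f
  set ν : Fin (r+1) → ℝ := hB.eigenvalues with hν
  set lam : Fin n → ℝ := hA.eigenvalues with hlam
  -- the Gershgorin lower bound
  set mmin : ℝ := S.inf' ⟨t, Finset.mem_insert_self t _⟩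
      (fun i => (A i i).re - ∑ s ∈ S.erase i, ‖A i s‖) with hmmin
  have hDdef : D = (A t t).re - mmin := hD
  -- row sums of B correspond to sums over S
  have hrowB : ∀ i : Fin (r+1), ∑ j ∈ Finset.univ.erase i, ‖B i j‖
      = ∑ s ∈ S.erase (f i), ‖A (f i) s‖ := by
    intro i
    have h1 : ‖B i i‖ + ∑ j ∈ Finset.univ.erase i, ‖B i j‖
        = ∑ j, ‖B i j‖ :=
      Finset.add_sum_erase _ (fun j => ‖B i j‖) (Finset.mem_univ i)
    have h2 : ‖A (f i) (f i)‖ + ∑ s ∈ S.erase (f i), ‖A (f i) s‖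
        = ∑ s ∈ S, ‖A (f i) s‖ :=
      Finset.add_sum_erase _ (fun s => ‖A (f i) s‖) (hfmem i)
    have h3 : ∑ j, ‖B i j‖ = ∑ s ∈ S, ‖A (f i) s‖ :=
      sumS (fun s => ‖A (f i) s‖)
    have h4 : ‖B i i‖ = ‖A (f i) (f i)‖ := rfl
    linarith
  have hlow : ∀ k, mmin ≤ ν k := by
    intro k
    obtain ⟨i, hi⟩ := aux_gersh hB k
    refine le_trans ?_ hi
    have h5 : mmin ≤ (A (f i) (f i)).re - ∑ s ∈ S.erase (f i), ‖A (f i) s‖ :=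
      Finset.inf'_le _ (hfmem i)
    rw [hrowB i]
    exact h5
  -- moments at t'
  set U : Matrix (Fin (r+1)) (Fin (r+1)) ℂ := (hB.eigenvectorUnitary : Matrix (Fin (r+1)) (Fin (r+1)) ℂ) with hU
  set p : Fin (r+1) → ℝ := fun k => Complex.normSq (U t' k) with hp
  have hp0 : ∀ k, 0 ≤ p k := fun k => Complex.normSq_nonneg _
  have hp1 : ∑ k, p k = 1 := aux_sumsq_U hB t'
  have hBt't' : B t' t' = A t t := by rw [hBdef]; simp [Matrix.submatrix_apply, hft']
  have hAttim : (A t t).im = 0 := by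
    have := hA.apply t t
    have h2 : (starRingEnd ℂ) (A t t) = A t t := this
    rw [Complex.conj_eq_iff_im] at h2
    exact h2
  have hm1 : ∑ k, ν k * p k = (A t t).re := by
    rw [← hBt't'] at *
    exact (aux_diag_moment1 hB t').symm
  set Q : ℝ := ∑ s ∈ R, Complex.normSq (A t s) with hQ
  have hQ0 : 0 ≤ Q := Finset.sum_nonneg fun s _ => Complex.normSq_nonneg _
  have hm2 : ∑ k, (ν k)^2 * p k = Q + ((A t t).re)^2 := by
    have h1 := aux_diag_moment2 hB t'
    have h2 : ∑ j, Complex.normSq (B t' j) = ∑ s ∈ S, Complex.normSq (A t s) := by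
      have := sumS (fun s => Complex.normSq (A t s))
      rw [← this]
      congr 1; ext j
      rw [hBdef]; simp [Matrix.submatrix_apply, hft']
    have h3 : ∑ s ∈ S, Complex.normSq (A t s) = Complex.normSq (A t t) + Q := by
      rw [hS, Finset.sum_insert htR, hQ]
    have h4 : Complex.normSq (A t t) = ((A t t).re)^2 := by
      rw [Complex.normSq_apply, hAttim]; ring
    rw [← h1, h2, h3, h4]; ring
  -- max eigenvalue of B
  obtain ⟨kmax, -, hkmax⟩ := Finset.exists_max_image (Finset.univ : Finset (Fin (r+1))) ν
    Finset.univ_nonempty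
  have hkmax' : ∀ k, ν k ≤ ν kmax := fun k => hkmax k (Finset.mem_univ k)
  -- quadratic bound
  have hquad : (A t t).re + Q / D ≤ ν kmax := by
    have hsum1 : ∑ k, (ν k - mmin) * p k = D := by
      have : ∑ k, (ν k - mmin) * p k = ∑ k, ν k * p k - mmin * ∑ k, p k := by
        rw [Finset.mul_sum, ← Finset.sum_sub_distrib]
        congr 1; ext k; ring
      rw [this, hm1, hp1, hDdef]; ring
    have hsum2 : ∑ k, (ν k - mmin)^2 * p k = Q + D^2 := by
      have : ∑ k, (ν k - mmin)^2 * p k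
          = ∑ k, (ν k)^2 * p k - 2 * mmin * ∑ k, ν k * p k + mmin^2 * ∑ k, p k := by
        rw [Finset.mul_sum, Finset.mul_sum, ← Finset.sum_sub_distrib, ← Finset.sum_add_distrib]
        congr 1; ext k; ring
      rw [this, hm1, hm2, hp1, hDdef]; ring
    have hterm : ∀ k, (ν k - mmin)^2 * p k ≤ (ν kmax - mmin) * ((ν k - mmin) * p k) := by
      intro k
      have h1 : 0 ≤ ν k - mmin := by linarith [hlow k]
      have h2 : ν k - mmin ≤ ν kmax - mmin := by linarith [hkmax' k]
      calc (ν k - mmin)^2 * p k = (ν k - mmin) * ((ν k - mmin) * p k) := by ring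
        _ ≤ (ν kmax - mmin) * ((ν k - mmin) * p k) :=
            mul_le_mul_of_nonneg_right h2 (mul_nonneg h1 (hp0 k))
    have hle : Q + D^2 ≤ (ν kmax - mmin) * D := by
      calc Q + D^2 = ∑ k, (ν k - mmin)^2 * p k := hsum2.symm
        _ ≤ ∑ k, (ν kmax - mmin) * ((ν k - mmin) * p k) :=
            Finset.sum_le_sum fun k _ => hterm k
        _ = (ν kmax - mmin) * ∑ k, (ν k - mmin) * p k := (Finset.mul_sum _ _ _).symm
        _ = (ν kmax - mmin) * D := by rw [hsum1]
    have hdiv : Q / D + D ≤ ν kmax - mmin := by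
      have h6 : (Q + D^2) / D ≤ ν kmax - mmin := by
        rw [div_le_iff₀ hDpos]; linarith
      have heq : (Q + D^2) / D = Q / D + D := by
        field_simp
      linarith [heq ▸ h6]
    have : mmin = (A t t).re - D := by linarith [hDdef]
    linarith
  -- embedding matrix and Ky Fan step
  set E : Matrix (Fin n) (Fin (r+1)) ℂ := Matrix.of fun j k => if f k = j then 1 else 0
    with hE
  have hEE : E.conjTranspose * E = 1 := by
    ext k l
    simp only [hE, Matrix.mul_apply, Matrix.conjTranspose_apply, Matrix.of_apply,
      apply_ite (star : ℂ → ℂ), star_one, star_zero, ite_mul, one_mul, zero_mul,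
      mul_ite, mul_one, mul_zero]
    rw [Finset.sum_ite_eq]
    simp only [Finset.mem_univ, if_true]
    by_cases h : k = l
    · subst h; simp [Matrix.one_apply]
    · have h2 : ¬ (f l = f k) := fun hc => h (hfinj hc).symm
      have h3 : ¬ (f k = f l) := fun hc => h (hfinj hc)
      simp [Matrix.one_apply, h2, h3, h]
  have hEAE : E.conjTranspose * A * E = B := by
    ext k l
    rw [Matrix.mul_assoc]
    simp only [hE, Matrix.mul_apply, Matrix.conjTranspose_apply, Matrix.of_apply,
      apply_ite (star : ℂ → ℂ), star_one, star_zero, ite_mul, one_mul, zero_mul,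
      mul_ite, mul_one, mul_zero]
    rw [Finset.sum_ite_eq]
    simp only [Finset.mem_univ, if_true]
    rw [Finset.sum_ite_eq]
    simp [hBdef, Matrix.submatrix_apply]
  set UA : Matrix (Fin n) (Fin n) ℂ := (hA.eigenvectorUnitary : Matrix (Fin n) (Fin n) ℂ)
    with hUA
  have hUAmul : UA * UA.conjTranspose = 1 := by
    rw [← Matrix.star_eq_conjTranspose]; exact aux_UUstar hA
  have hUmulc : U.conjTranspose * U = 1 := by
    rw [← Matrix.star_eq_conjTranspose]; exact aux_UstarU hB
  set M : Matrix (Fin n) (Fin (r+1)) ℂ := UA.conjTranspose * (E * U) with hM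
  have hMH : M.conjTranspose = (U.conjTranspose * E.conjTranspose) * UA := by
    rw [hM, Matrix.conjTranspose_mul, Matrix.conjTranspose_mul,
      Matrix.conjTranspose_conjTranspose]
  have hMM : M.conjTranspose * M = 1 := by
    rw [hMH, hM]
    simp only [Matrix.mul_assoc]
    rw [← Matrix.mul_assoc UA UA.conjTranspose (E * U), hUAmul, Matrix.one_mul,
      ← Matrix.mul_assoc E.conjTranspose E U, hEE, Matrix.one_mul]
    exact hUmulc
  set DA : Matrix (Fin n) (Fin n) ℂ := Matrix.diagonal (RCLike.ofReal ∘ lam) with hDA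
  have hMDM : M.conjTranspose * DA * M = Matrix.diagonal (RCLike.ofReal ∘ ν) := by
    have hAr : ∀ X : Matrix (Fin n) (Fin (r+1)) ℂ, UA * (DA * (UA.conjTranspose * X)) = A * X := by
      intro X
      conv_rhs => rw [hA.spectral_theorem, Unitary.conjStarAlgAut_apply]
      simp only [Matrix.star_eq_conjTranspose, Matrix.mul_assoc, hDA, hUA, hlam]
    rw [hMH, hM]
    simp only [Matrix.mul_assoc]
    rw [hAr (E * U)]
    rw [← Matrix.mul_assoc A E U, ← Matrix.mul_assoc E.conjTranspose (A * E) U,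
      ← Matrix.mul_assoc E.conjTranspose A E, hEAE]
    rw [← Matrix.mul_assoc U.conjTranspose B U]
    have h9 := hB.conjStarAlgAut_star_eigenvectorUnitary
    simp only [Unitary.conjStarAlgAut_apply, Unitary.coe_star, star_star] at h9
    rw [Matrix.star_eq_conjTranspose] at h9
    exact h9
  have hνk : ∀ k, ν k = ∑ j, lam j * Complex.normSq (M j k) := by
    intro k
    have h := congrArg (fun X : Matrix (Fin (r+1)) (Fin (r+1)) ℂ => X k k) hMDM
    rw [Matrix.mul_assoc] at h
    simp only [hDA, Matrix.mul_apply, Matrix.diagonal_apply, Matrix.conjTranspose_apply,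
      Function.comp_apply, ite_mul, mul_ite, zero_mul, mul_zero, Finset.sum_ite_eq,
      Finset.sum_ite_eq', Finset.mem_univ, if_true] at h
    have h2 : ∑ j, star (M j k) * ((RCLike.ofReal (lam j) : ℂ) * M j k)
        = ∑ j, ((lam j * Complex.normSq (M j k) : ℝ) : ℂ) := by
      congr 1; ext j
      push_cast
      rw [← Complex.mul_conj]
      show (starRingEnd ℂ) (M j k) * ((lam j : ℂ) * M j k)
        = (lam j : ℂ) * (M j k * (starRingEnd ℂ) (M j k))
      ring
    rw [h2] at h
    rw [← Complex.ofReal_sum] at h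
    have h5 := congrArg Complex.re h
    simpa using h5.symm
  have hcolM : ∀ k, ∑ j, Complex.normSq (M j k) = 1 := by
    intro k
    have h := congrArg (fun X : Matrix (Fin (r+1)) (Fin (r+1)) ℂ => X k k) hMM
    simp only [Matrix.mul_apply, Matrix.conjTranspose_apply, Matrix.one_apply_eq] at h
    have h2 : ∑ j, star (M j k) * M j k = ∑ j, ((Complex.normSq (M j k) : ℝ) : ℂ) := by
      congr 1; ext j
      rw [← Complex.mul_conj]
      show (starRingEnd ℂ) (M j k) * M j k = M j k * (starRingEnd ℂ) (M j k)
      ring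
    rw [h2, ← Complex.ofReal_sum] at h
    exact_mod_cast h
  have hrowM : ∀ j, ∑ k, Complex.normSq (M j k) ≤ 1 := by
    intro j
    exact aux_row_bound M hMM j
  -- the weights q
  set q : Fin n → ℝ := fun j => ∑ k ∈ Finset.univ.erase kmax, Complex.normSq (M j k) with hq
  have hq0 : ∀ j, 0 ≤ q j := fun j => Finset.sum_nonneg fun k _ => Complex.normSq_nonneg _
  have hq1 : ∀ j, q j ≤ 1 := by
    intro j
    refine le_trans ?_ (hrowM j)
    exact Finset.sum_le_sum_of_subset_of_nonneg (Finset.subset_univ _)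
      (fun k _ _ => Complex.normSq_nonneg _)
  have hqs : ∑ j, q j = r := by
    rw [hq]
    rw [Finset.sum_comm]
    rw [Finset.sum_congr rfl fun k _ => hcolM k]
    simp [Finset.card_erase_of_mem]
  have hsum_q : ∑ j, lam j * q j = ∑ k ∈ Finset.univ.erase kmax, ν k := by
    rw [hq]
    rw [Finset.sum_congr rfl (fun j (_ : j ∈ Finset.univ) => Finset.mul_sum
      (Finset.univ.erase kmax) (fun k => Complex.normSq (M j k)) (lam j))]
    rw [Finset.sum_comm]
    exact Finset.sum_congr rfl fun k _ => (hνk k).symm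
  -- apply rearrangement
  obtain ⟨σ, hσ⟩ := hμ
  have hmain1 : ∑ j ∈ R, μ j ≤ ∑ k ∈ Finset.univ.erase kmax, ν k := by
    have h1 : ∑ j ∈ R, μ j ≤ ∑ j, μ j * q (σ j) := by
      apply aux_rearrange hn μ hmono (fun j => q (σ j)) (fun j => hq0 _) (fun j => hq1 _)
      rw [← hqs]
      exact Equiv.sum_comp σ q
    have h2 : ∑ j, μ j * q (σ j) = ∑ j, lam j * q j := by
      rw [hσ]
      exact Equiv.sum_comp σ (fun j => lam j * q j)
    calc ∑ j ∈ R, μ j ≤ ∑ j, μ j * q (σ j) := h1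
      _ = ∑ j, lam j * q j := h2
      _ = _ := hsum_q
  -- trace computation
  have htrace : ∑ k, ν k = (A t t).re + ∑ i ∈ R, (A i i).re := by
    rw [aux_trace hB]
    have h1 : ∑ i : Fin (r+1), (B i i).re = ∑ i ∈ S, (A i i).re := by
      have := sumS (fun i => (A i i).re)
      rw [← this]
      rfl
    rw [h1, hS, Finset.sum_insert htR]
  have herase : ∑ k ∈ Finset.univ.erase kmax, ν k = ∑ k, ν k - ν kmax := by
    have := Finset.add_sum_erase Finset.univ ν (Finset.mem_univ kmax)
    linarith
  -- final chain
  have hQabs : ∑ s ∈ R, ‖A t s‖ ^ 2 = Q := by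
    rw [hQ]; congr 1; ext s; rw [Complex.sq_norm]
  calc ∑ i ∈ R, μ i ≤ ∑ k ∈ Finset.univ.erase kmax, ν k := hmain1
    _ = ∑ k, ν k - ν kmax := herase
    _ = (A t t).re + ∑ i ∈ R, (A i i).re - ν kmax := by rw [htrace]
    _ ≤ (A t t).re + ∑ i ∈ R, (A i i).re - ((A t t).re + Q / D) := by linarith [hquad]
    _ = ∑ i ∈ R, (A i i).re - Q / D := by ring
    _ = ∑ i ∈ R, (A i i).re - (∑ s ∈ R, ‖A t s‖ ^ 2) / D := by rw [hQabs]

end MainProof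
end

section
/- Let A be an n×n complex Hermitian matrix with diagonal entries ordered so that a_{11} ≤ a_{22} ≤ ... ≤ a_{nn}, and let its eigenvalues be enumerated in increasing order λ_1(A) ≤ ... ≤ λ_n(A). Then for all integers r, k, t with 1 ≤ r ≤ n−1, 1 ≤ k ≤ r, and r < t ≤ n, one has Σ_{i=1}^{r} λ_i(A) ≤ Σ_{i=1}^{r} a_{ii} − ( √((a_{tt} − a_{kk})² + 4|a_{tk}|²) − (a_{tt} − a_{kk}) ) / 2. -/
open Finset Matrix

lemma card_filter_lt_fin {n r : ℕ} (hrn : r ≤ n) :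
    (Finset.univ.filter fun i : Fin n => (i : ℕ) < r).card = r := by
  have h : (Finset.univ.filter fun i : Fin n => (i : ℕ) < r)
      = Finset.univ.map (Fin.castLEEmb hrn) := by
    ext i
    simp only [Finset.mem_filter, Finset.mem_univ, true_and, Finset.mem_map,
      Fin.castLEEmb_apply]
    constructor
    · intro hi; exact ⟨⟨i, hi⟩, rfl⟩
    · rintro ⟨j, rfl⟩; exact j.isLt
  rw [h, Finset.card_map, Finset.card_univ, Fintype.card_fin]

lemma star_single_one {n : ℕ} (i : Fin n) :
    star (Pi.single i (1:ℂ) : Fin n → ℂ) = Pi.single i (1:ℂ) := by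
  funext j
  rcases eq_or_ne j i with h | h
  · subst h; simp
  · simp [Pi.single_apply, h]
lemma comb_lemma {n r : ℕ} (hr1 : 1 ≤ r) (hrn : r ≤ n) (μ c : Fin n → ℝ)
    (hmono : Monotone μ) (hc0 : ∀ j, 0 ≤ c j) (hc1 : ∀ j, c j ≤ 1)
    (hsum : ∑ j, c j = r) :
    ∑ i ∈ Finset.univ.filter (fun i : Fin n => (i : ℕ) < r), μ i ≤ ∑ j, c j * μ j := by
  have hrn' : r - 1 < n := by omega
  set p := μ ⟨r - 1, hrn'⟩ with hp
  have key : ∀ j : Fin n, 0 ≤ (c j - if (j : ℕ) < r then 1 else 0) * (μ j - p) := by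
    intro j
    by_cases hj : (j : ℕ) < r
    · simp only [hj, if_pos]
      have h1 : c j - 1 ≤ 0 := by linarith [hc1 j]
      have h2 : μ j - p ≤ 0 := by
        have : j ≤ (⟨r - 1, hrn'⟩ : Fin n) := by
          simp [Fin.le_def]; omega
        linarith [hmono this]
      nlinarith
    · simp only [hj, if_neg, not_false_iff, sub_zero]
      have h2 : 0 ≤ μ j - p := by
        have : (⟨r - 1, hrn'⟩ : Fin n) ≤ j := by
          simp [Fin.le_def]; omega
        linarith [hmono this]
      exact mul_nonneg (hc0 j) h2
  have hsum2 : (0:ℝ) ≤ ∑ j, (c j - if (j : ℕ) < r then 1 else 0) * (μ j - p) :=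
    Finset.sum_nonneg fun j _ => key j
  have hexp : ∑ j, (c j - if (j : ℕ) < r then 1 else 0) * (μ j - p)
      = ∑ j, c j * μ j - ∑ i ∈ Finset.univ.filter (fun i : Fin n => (i : ℕ) < r), μ i
        - p * (∑ j, c j) + p * r := by
    have e1 : ∑ j : Fin n, (if (j : ℕ) < r then (1:ℝ) else 0) * μ j
        = ∑ i ∈ Finset.univ.filter (fun i : Fin n => (i : ℕ) < r), μ i := by
      rw [Finset.sum_filter]
      congr 1; ext j; by_cases hj : (j:ℕ) < r <;> simp [hj]
    have e2 : ∑ j : Fin n, (if (j : ℕ) < r then (1:ℝ) else 0) = r := by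
      rw [← Finset.sum_filter]
      simp [card_filter_lt_fin hrn]
    calc ∑ j, (c j - if (j : ℕ) < r then 1 else 0) * (μ j - p)
        = ∑ j, (c j * μ j - (if (j : ℕ) < r then (1:ℝ) else 0) * μ j
            - c j * p + (if (j : ℕ) < r then (1:ℝ) else 0) * p) := by
          congr 1; ext j; ring
      _ = _ := by
          rw [Finset.sum_add_distrib, Finset.sum_sub_distrib, Finset.sum_sub_distrib, e1,
            ← Finset.sum_mul, ← Finset.sum_mul, e2]
          ring
  rw [hexp, hsum] at hsum2
  linarith

lemma kyfan {n : ℕ} (A : Matrix (Fin n) (Fin n) ℂ) (hA : A.IsHermitian)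
    (μ : Fin n → ℝ) (σ : Equiv.Perm (Fin n)) (hμ : μ = hA.eigenvalues ∘ σ)
    (hmono : Monotone μ) (r : ℕ) (hr1 : 1 ≤ r) (hrn : r ≤ n)
    (P : Matrix (Fin n) (Fin n) ℂ) (hPh : Pᴴ = P) (hP2 : P * P = P)
    (htr : P.trace = (r : ℂ)) :
    ∑ i ∈ Finset.univ.filter (fun i : Fin n => (i : ℕ) < r), μ i
      ≤ (Matrix.trace (P * A)).re := by
  set U : Matrix (Fin n) (Fin n) ℂ := (hA.eigenvectorUnitary : Matrix (Fin n) (Fin n) ℂ)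
    with hU
  have hU1 : U * star U = 1 := Matrix.mem_unitaryGroup_iff.mp hA.eigenvectorUnitary.2
  have hU2 : star U * U = 1 := Matrix.mem_unitaryGroup_iff'.mp hA.eigenvectorUnitary.2
  set Q : Matrix (Fin n) (Fin n) ℂ := star U * P * U with hQ
  have hQ2 : Q * Q = Q := by
    have h : U * (star U * (P * U)) = P * U := by
      rw [← Matrix.mul_assoc, hU1, Matrix.one_mul]
    calc Q * Q = star U * (P * (U * (star U * (P * U)))) := by
          simp only [hQ, Matrix.mul_assoc]
      _ = star U * (P * (P * U)) := by rw [h]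
      _ = Q := by rw [← Matrix.mul_assoc P P U, hP2, hQ, Matrix.mul_assoc]
  have hQh : Qᴴ = Q := by
    have hUs : star U = Uᴴ := rfl
    simp only [hQ, Matrix.conjTranspose_mul, ← hUs, star_star, hPh, Matrix.mul_assoc,
      Matrix.conjTranspose_conjTranspose]
    rw [show (star U)ᴴ = U from star_star U]
  set c : Fin n → ℝ := fun j => (Q j j).re with hc
  have hQjj : ∀ j, Q j j = ((∑ l, Complex.normSq (Q j l) : ℝ) : ℂ) := by
    intro j
    have h1 : (Q * Q) j j = Q j j := by rw [hQ2]
    rw [Matrix.mul_apply] at h1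
    have h2 : ∀ l, Q l j = star (Q j l) := by
      intro l
      conv_lhs => rw [← hQh]
      rfl
    rw [← h1]
    push_cast
    refine Finset.sum_congr rfl fun l _ => ?_
    rw [h2 l]
    exact Complex.mul_conj _
  have hcs : ∀ j, c j = ∑ l, Complex.normSq (Q j l) := by
    intro j; simp [hc, hQjj j]
  have hQr : ∀ j, Q j j = ((c j : ℝ) : ℂ) := by
    intro j; rw [hQjj j, hcs j]
  have hc0 : ∀ j, 0 ≤ c j := by
    intro j
    rw [hcs j]
    exact Finset.sum_nonneg fun l _ => Complex.normSq_nonneg _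
  have hc1 : ∀ j, c j ≤ 1 := by
    intro j
    have hle : Complex.normSq (Q j j) ≤ ∑ l, Complex.normSq (Q j l) :=
      Finset.single_le_sum (fun l _ => Complex.normSq_nonneg _) (Finset.mem_univ j)
    have hns : Complex.normSq (Q j j) = c j * c j := by
      rw [hQr j, Complex.normSq_ofReal]
    rw [hns, ← hcs j] at hle
    nlinarith [hc0 j]
  have htrQ : Q.trace = (r : ℂ) := by
    have h : U * (star U * P) = P := by rw [← Matrix.mul_assoc, hU1, Matrix.one_mul]
    rw [hQ, Matrix.trace_mul_comm, h, htr]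
  have hsumc : ∑ j, c j = r := by
    have h : (Q.trace).re = ((r : ℂ)).re := by rw [htrQ]
    simpa [Matrix.trace, Matrix.diag, Complex.re_sum, hc] using h
  have hPA : (Matrix.trace (P * A)).re = ∑ j, c j * hA.eigenvalues j := by
    set D : Matrix (Fin n) (Fin n) ℂ :=
      Matrix.diagonal (RCLike.ofReal ∘ hA.eigenvalues) with hD
    have spec := hA.spectral_theorem
    have h1 : P * A = (P * (U * D)) * star U := by
      rw [spec, Unitary.conjStarAlgAut_apply]; simp only [Matrix.mul_assoc]; rfl
    have h2 : Matrix.trace (P * A) = Matrix.trace (Q * D) := by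
      rw [h1, Matrix.trace_mul_comm]
      congr 1
      rw [hQ]; simp only [Matrix.mul_assoc]
    have h3 : Matrix.trace (Q * D) = ∑ j, ((c j : ℝ) : ℂ) * ((hA.eigenvalues j : ℝ) : ℂ) := by
      rw [Matrix.trace]
      refine Finset.sum_congr rfl fun j _ => ?_
      rw [Matrix.diag_apply, hD, Matrix.mul_diagonal, hQr j]
      rfl
    rw [h2, h3]
    rw [Complex.re_sum]
    refine Finset.sum_congr rfl fun j _ => ?_
    simp
  rw [hPA]
  have hre : ∑ j, c j * hA.eigenvalues j
      = ∑ j, (c ∘ σ) j * (hA.eigenvalues ∘ σ) j :=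
    (Equiv.sum_comp σ (fun j => c j * hA.eigenvalues j)).symm
  rw [hre, hμ]
  have hsum' : ∑ j, (c ∘ σ) j = r := by
    rw [show ∑ j, (c ∘ σ) j = ∑ j, c j from Equiv.sum_comp σ c, hsumc]
  rw [hμ] at hmono
  exact comb_lemma hr1 hrn _ _ hmono (fun j => hc0 _) (fun j => hc1 _) hsum'


open Finset Matrix

variable {n : ℕ} (S : Finset (Fin n)) (v : Fin n → Fin n → ℂ)

noncomputable def projOf : Matrix (Fin n) (Fin n) ℂ :=
  Matrix.of fun p q => ∑ i ∈ S, v i p * star (v i q)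

lemma projOf_conjTranspose : (projOf S v)ᴴ = projOf S v := by
  ext p q
  simp only [projOf, Matrix.conjTranspose_apply, Matrix.of_apply, star_sum]
  exact Finset.sum_congr rfl fun i _ => by
    rw [StarMul.star_mul, star_star]

lemma projOf_idem
    (horth : ∀ i ∈ S, ∀ j ∈ S, star (v i) ⬝ᵥ v j = if i = j then (1:ℂ) else 0) :
    projOf S v * projOf S v = projOf S v := by
  ext p q
  rw [Matrix.mul_apply]
  have step1 : ∀ l, projOf S v p l * projOf S v l q
      = ∑ i ∈ S, ∑ j ∈ S, (v i p * star (v i l)) * (v j l * star (v j q)) := by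
    intro l
    rw [show projOf S v p l = ∑ i ∈ S, v i p * star (v i l) from rfl,
      show projOf S v l q = ∑ j ∈ S, v j l * star (v j q) from rfl,
      Finset.sum_mul_sum]
  calc ∑ l, projOf S v p l * projOf S v l q
      = ∑ l, ∑ i ∈ S, ∑ j ∈ S, (v i p * star (v i l)) * (v j l * star (v j q)) :=
        Finset.sum_congr rfl fun l _ => step1 l
    _ = ∑ i ∈ S, ∑ j ∈ S, ∑ l, (v i p * star (v i l)) * (v j l * star (v j q)) := by
        rw [Finset.sum_comm]
        exact Finset.sum_congr rfl fun i _ => Finset.sum_comm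
    _ = ∑ i ∈ S, ∑ j ∈ S, (v i p * star (v j q)) * (star (v i) ⬝ᵥ v j) := by
        refine Finset.sum_congr rfl fun i _ => Finset.sum_congr rfl fun j _ => ?_
        rw [dotProduct, Finset.mul_sum]
        exact Finset.sum_congr rfl fun l _ => by simp [Pi.star_apply]; ring
    _ = ∑ i ∈ S, ∑ j ∈ S, (v i p * star (v j q)) * (if i = j then (1:ℂ) else 0) := by
        refine Finset.sum_congr rfl fun i hi => Finset.sum_congr rfl fun j hj => ?_
        rw [horth i hi j hj]
    _ = ∑ i ∈ S, v i p * star (v i q) := by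
        refine Finset.sum_congr rfl fun i hi => ?_
        simp only [mul_ite, mul_one, mul_zero]
        rw [Finset.sum_ite_eq S i (fun j => v i p * star (v j q)), if_pos hi]
    _ = projOf S v p q := rfl

lemma projOf_trace
    (horth : ∀ i ∈ S, ∀ j ∈ S, star (v i) ⬝ᵥ v j = if i = j then (1:ℂ) else 0) :
    (projOf S v).trace = (S.card : ℂ) := by
  rw [Matrix.trace]
  calc ∑ p, (projOf S v).diag p = ∑ p, ∑ i ∈ S, v i p * star (v i p) := rfl
    _ = ∑ i ∈ S, ∑ p, v i p * star (v i p) := Finset.sum_comm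
    _ = ∑ i ∈ S, (star (v i) ⬝ᵥ v i) := by
        refine Finset.sum_congr rfl fun i _ => ?_
        rw [dotProduct]
        exact Finset.sum_congr rfl fun l _ => by simp [Pi.star_apply]; ring
    _ = ∑ i ∈ S, (1:ℂ) := by
        refine Finset.sum_congr rfl fun i hi => ?_
        rw [horth i hi i hi, if_pos rfl]
    _ = (S.card : ℂ) := by simp

lemma projOf_trace_mul (A : Matrix (Fin n) (Fin n) ℂ) :
    Matrix.trace (projOf S v * A) = ∑ i ∈ S, star (v i) ⬝ᵥ (A *ᵥ v i) := by
  rw [Matrix.trace]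
  calc ∑ p, (projOf S v * A).diag p
      = ∑ p, ∑ l, (∑ i ∈ S, v i p * star (v i l)) * A l p := by
        refine Finset.sum_congr rfl fun p _ => ?_
        rw [Matrix.diag_apply, Matrix.mul_apply]
        rfl
    _ = ∑ p, ∑ l, ∑ i ∈ S, v i p * star (v i l) * A l p := by
        refine Finset.sum_congr rfl fun p _ => Finset.sum_congr rfl fun l _ => ?_
        rw [Finset.sum_mul]
    _ = ∑ p, ∑ i ∈ S, ∑ l, v i p * star (v i l) * A l p := by
        exact Finset.sum_congr rfl fun p _ => Finset.sum_comm
    _ = ∑ i ∈ S, ∑ p, ∑ l, v i p * star (v i l) * A l p := Finset.sum_comm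
    _ = ∑ i ∈ S, star (v i) ⬝ᵥ (A *ᵥ v i) := by
        refine Finset.sum_congr rfl fun i _ => ?_
        rw [Finset.sum_comm, dotProduct]
        refine Finset.sum_congr rfl fun l _ => ?_
        rw [Pi.star_apply, Matrix.mulVec, dotProduct, Finset.mul_sum]
        exact Finset.sum_congr rfl fun p _ => by ring

/-- For an `n × n` complex Hermitian matrix `A` with increasing diagonal
and sorted eigenvalues `μ`, and `1 ≤ r ≤ n - 1`, `1 ≤ k ≤ r`, `r < t ≤ n`
(here `k` and `t` are 0-indexed, so `k < r` and `r ≤ t < n`),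
`Σ_{i=1}^r λᵢ(A) ≤ Σ_{i=1}^r aᵢᵢ - (√((a_tt - a_kk)² + 4|a_tk|²) - (a_tt - a_kk)) / 2`. -/
theorem partial_sum_eigenvalues_schur_refinement_two_by_two
    {n : ℕ} (A : Matrix (Fin n) (Fin n) ℂ) (hA : A.IsHermitian)
    (hdiag : Monotone fun i : Fin n => (A i i).re)
    (μ : Fin n → ℝ) (hμ : ∃ σ : Equiv.Perm (Fin n), μ = hA.eigenvalues ∘ σ)
    (hmono : Monotone μ)
    (r : ℕ) (hr1 : 1 ≤ r) (hrn : r ≤ n - 1)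
    (k : Fin n) (hk : (k : ℕ) < r)
    (t : Fin n) (ht : r ≤ (t : ℕ)) :
    ∑ i ∈ Finset.univ.filter (fun i : Fin n => (i : ℕ) < r), μ i ≤
      ∑ i ∈ Finset.univ.filter (fun i : Fin n => (i : ℕ) < r), (A i i).re -
        (Real.sqrt (((A t t).re - (A k k).re) ^ 2 + 4 * ‖A t k‖ ^ 2) -
          ((A t t).re - (A k k).re)) / 2 := by
  obtain ⟨σ, hσ⟩ := hμ
  have hrn' : r ≤ n := le_of_lt (lt_of_le_of_lt ht t.isLt)
  have hkt : k ≠ t := by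
    intro h
    rw [h] at hk
    omega
  set a : ℝ := (A k k).re with ha
  set d : ℝ := (A t t).re with hd
  set b : ℂ := A t k with hb
  have hAkk : A k k = (a : ℂ) := by
    have h := hA.apply k k
    exact (Complex.conj_eq_iff_re.mp h).symm
  have hAtt : A t t = (d : ℂ) := by
    have h := hA.apply t t
    exact (Complex.conj_eq_iff_re.mp h).symm
  have hAkt : A k t = star b := (hA.apply k t).symm
  set s : ℝ := Real.sqrt ((d - a) ^ 2 + 4 * ‖b‖ ^ 2) with hs
  have hsq : s ^ 2 = (d - a) ^ 2 + 4 * Complex.normSq b := by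
    rw [hs, Real.sq_sqrt (by positivity), Complex.sq_norm]
  set m : ℝ := (a + d - s) / 2 with hm
  have hquad : Complex.normSq b = (m - a) * (m - d) := by
    rw [hm]
    nlinarith [hsq]
  set N : ℝ := Complex.normSq b + (m - a) ^ 2 with hN
  set u : Fin n → ℂ := fun j =>
    if j = k then (starRingEnd ℂ) b else if j = t then ((m - a : ℝ) : ℂ) else 0 with hu
  have hu0 : ∀ j, j ≠ k → j ≠ t → u j = 0 := by
    intro j h1 h2; simp [hu, h1, h2]
  have huk : u k = (starRingEnd ℂ) b := by simp [hu]
  have hut : u t = ((m - a : ℝ) : ℂ) := by simp [hu, hkt.symm]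
  have two_point : ∀ x : Fin n → ℂ, (∀ j, j ≠ k → j ≠ t → x j = 0) →
      ∀ y : Fin n → ℂ, star x ⬝ᵥ y = star (x k) * y k + star (x t) * y t := by
    intro x hx y
    rw [dotProduct,
      ← Finset.sum_subset (Finset.subset_univ ({k, t} : Finset (Fin n)))]
    · rw [Finset.sum_pair hkt]; rfl
    · intro j _ hj
      simp only [Finset.mem_insert, Finset.mem_singleton, not_or] at hj
      rw [Pi.star_apply, hx j hj.1 hj.2, star_zero, zero_mul]
  have hmv : ∀ j, (A *ᵥ u) j = A j k * (starRingEnd ℂ) b + A j t * ((m - a : ℝ) : ℂ) := by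
    intro j
    rw [Matrix.mulVec, dotProduct,
      ← Finset.sum_subset (Finset.subset_univ ({k, t} : Finset (Fin n)))]
    · rw [Finset.sum_pair hkt, huk, hut]
    · intro l _ hl
      simp only [Finset.mem_insert, Finset.mem_singleton, not_or] at hl
      rw [hu0 l hl.1 hl.2, mul_zero]
  have hbc : b * (starRingEnd ℂ) b = ((Complex.normSq b : ℝ) : ℂ) := Complex.mul_conj b
  have hquadC : ((Complex.normSq b : ℝ) : ℂ)
      = (((m : ℝ) : ℂ) - ((a : ℝ) : ℂ)) * (((m : ℝ) : ℂ) - ((d : ℝ) : ℂ)) := by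
    rw [← Complex.ofReal_sub, ← Complex.ofReal_sub, ← Complex.ofReal_mul]
    exact_mod_cast congrArg Complex.ofReal hquad
  have hu_dot : star u ⬝ᵥ (A *ᵥ u) = ((m * N : ℝ) : ℂ) := by
    rw [two_point u hu0, hmv k, hmv t, huk, hut, hAkk, hAkt, hAtt, ← hb, hN]
    simp only [Complex.star_def, Complex.conj_conj, Complex.conj_ofReal]
    push_cast
    linear_combination (((a : ℝ) : ℂ) + 2 * (((m : ℝ) : ℂ) - ((a : ℝ) : ℂ))) * hbc
      + (((m : ℝ) : ℂ) - ((a : ℝ) : ℂ)) * hquadC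
  have hu_norm : star u ⬝ᵥ u = ((N : ℝ) : ℂ) := by
    rw [two_point u hu0, huk, hut, hN]
    simp only [Complex.star_def, Complex.conj_conj, Complex.conj_ofReal]
    push_cast
    linear_combination hbc
  obtain ⟨w, hw0, hw2, hw3⟩ :
      ∃ w : Fin n → ℂ, (∀ j, j ≠ k → j ≠ t → w j = 0) ∧
        star w ⬝ᵥ w = 1 ∧ star w ⬝ᵥ (A *ᵥ w) = ((m : ℝ) : ℂ) := by
    by_cases hNz : N = 0
    · have hma : m = a := by
        have h1 : (0:ℝ) ≤ Complex.normSq b := Complex.normSq_nonneg b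
        have h2 : (0:ℝ) ≤ (m - a) ^ 2 := sq_nonneg _
        have := hN
        nlinarith [hNz.symm.trans hN]
      refine ⟨Pi.single k 1, ?_, ?_, ?_⟩
      · intro j h1 _; simp [Pi.single_apply, h1]
      · rw [star_single_one, single_dotProduct, one_mul, Pi.single_eq_same]
      · rw [star_single_one, single_dotProduct, one_mul]
        simp only [Matrix.mulVec_single, mul_one, MulOpposite.op_one, one_smul, Matrix.col_apply]
        rw [hAkk, hma]
    · have hNnn : (0:ℝ) ≤ N := by
        rw [hN]
        exact add_nonneg (Complex.normSq_nonneg b) (sq_nonneg _)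
      have hNpos : 0 < N := lt_of_le_of_ne hNnn (Ne.symm hNz)
      set c0 : ℂ := (((Real.sqrt N)⁻¹ : ℝ) : ℂ) with hc0
      have hc0star : star c0 = c0 := Complex.conj_ofReal _
      have hc0sq : c0 * c0 = ((N⁻¹ : ℝ) : ℂ) := by
        rw [hc0, ← Complex.ofReal_mul, ← mul_inv, Real.mul_self_sqrt hNnn]
      refine ⟨c0 • u, ?_, ?_, ?_⟩
      · intro j h1 h2; simp [Pi.smul_apply, hu0 j h1 h2]
      · rw [star_smul, hc0star, smul_dotProduct, dotProduct_smul, hu_norm,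
          smul_eq_mul, smul_eq_mul, ← mul_assoc, hc0sq, ← Complex.ofReal_mul,
          inv_mul_cancel₀ hNz, Complex.ofReal_one]
      · rw [Matrix.mulVec_smul, star_smul, hc0star, smul_dotProduct,
          dotProduct_smul, hu_dot, smul_eq_mul, smul_eq_mul, ← mul_assoc, hc0sq,
          ← Complex.ofReal_mul]
        congr 1
        field_simp
  set S : Finset (Fin n) := Finset.univ.filter (fun i : Fin n => (i : ℕ) < r) with hS
  have hkS : k ∈ S := by simp [hS, hk]
  have htS : ∀ i ∈ S, i ≠ t := by
    intro i hi hit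
    rw [hS, Finset.mem_filter] at hi
    rw [hit] at hi
    omega
  set v : Fin n → Fin n → ℂ := fun i => if i = k then w else Pi.single i 1 with hv
  have hvk : v k = w := by simp [hv]
  have hvi : ∀ i, i ≠ k → v i = Pi.single i 1 := by intro i h; simp [hv, h]
  have horth : ∀ i ∈ S, ∀ j ∈ S, star (v i) ⬝ᵥ v j = if i = j then (1:ℂ) else 0 := by
    intro i hi j hj
    by_cases hik : i = k
    · by_cases hjk : j = k
      · rw [hik, hjk, hvk, hw2, if_pos rfl]
      · rw [hik, hvk, hvi j hjk, dotProduct_single, mul_one, Pi.star_apply,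
          hw0 j hjk (htS j hj), star_zero, if_neg (fun h => hjk h.symm)]
    · by_cases hjk : j = k
      · rw [hjk, hvi i hik, hvk, star_single_one, single_dotProduct, one_mul,
          hw0 i hik (htS i hi), if_neg hik]
      · rw [hvi i hik, hvi j hjk, star_single_one, single_dotProduct, one_mul,
          Pi.single_apply]
  have hPh := projOf_conjTranspose S v
  have hP2 := projOf_idem S v horth
  have htrP : (projOf S v).trace = (r : ℂ) := by
    rw [projOf_trace S v horth, hS, card_filter_lt_fin hrn']
  have key := kyfan A hA μ σ hσ hmono r hr1 hrn' (projOf S v) hPh hP2 htrP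
  have htrPA : Matrix.trace (projOf S v * A)
      = (∑ i ∈ S.erase k, A i i) + ((m : ℝ) : ℂ) := by
    rw [projOf_trace_mul S v A, ← Finset.add_sum_erase S _ hkS, hvk, hw3, add_comm]
    congr 1
    refine Finset.sum_congr rfl fun i hi => ?_
    have hik : i ≠ k := Finset.ne_of_mem_erase hi
    rw [hvi i hik, star_single_one, single_dotProduct, one_mul]
    simp only [Matrix.mulVec_single, mul_one, MulOpposite.op_one, one_smul, Matrix.col_apply]
  have hre : (Matrix.trace (projOf S v * A)).re
      = (∑ i ∈ S, (A i i).re) - a + m := by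
    rw [htrPA, Complex.add_re, Complex.ofReal_re, Complex.re_sum,
      Finset.sum_erase_eq_sub hkS]
  have hfin : (∑ i ∈ S, (A i i).re) - a + m
      = (∑ i ∈ S, (A i i).re) - (s - (d - a)) / 2 := by
    rw [hm]; ring
  rw [hre, hfin] at key
  exact key
end

section
/- Let A be an n×n complex Hermitian matrix with entries a_{ij} and eigenvalues λ_1(A) ≤ ... ≤ λ_n(A). Then for every k with 1 ≤ k ≤ n−1, Σ_{i=1}^{n−1} λ_i(A) ≤ Σ_{i=1}^{n−1} a_{ii} − ( √((a_{nn} − a_{kk})² + 4|a_{kn}|²) − (a_{nn} − a_{kk}) ) / 2. -/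
open Matrix Finset
open scoped ComplexOrder

open Matrix Finset
open scoped ComplexOrder

lemma aux_rayleigh {n : ℕ} (A : Matrix (Fin n) (Fin n) ℂ) (hA : A.IsHermitian) (c : ℝ)
    (hc : ∀ i, hA.eigenvalues i ≤ c) (x : Fin n → ℂ) :
    (dotProduct (star x) (A *ᵥ x)).re ≤ c * ∑ i, Complex.normSq (x i) := by
  set U : Matrix (Fin n) (Fin n) ℂ := (hA.eigenvectorUnitary : Matrix (Fin n) (Fin n) ℂ) with hUdef
  have hU : U * star U = 1 := Matrix.mem_unitaryGroup_iff.mp hA.eigenvectorUnitary.2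
  have hdiag : (c : ℂ) • (1 : Matrix (Fin n) (Fin n) ℂ) - A
      = U * Matrix.diagonal (fun i => ((c - hA.eigenvalues i : ℝ) : ℂ)) * star U := by
    have h1 : (c : ℂ) • (1 : Matrix (Fin n) (Fin n) ℂ)
        = U * ((c : ℂ) • (1 : Matrix (Fin n) (Fin n) ℂ)) * star U := by
      rw [Matrix.mul_smul, Matrix.smul_mul, mul_one, hU]
    conv_lhs => rw [hA.spectral_theorem, Unitary.conjStarAlgAut_apply, h1]
    rw [← Matrix.sub_mul, ← Matrix.mul_sub, Matrix.smul_one_eq_diagonal, Matrix.diagonal_sub]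
    congr 2
    ext i
    simp
  have hB : Matrix.PosSemidef ((c : ℂ) • (1 : Matrix (Fin n) (Fin n) ℂ) - A) := by
    rw [hdiag]
    exact (Matrix.PosSemidef.diagonal (fun i => Complex.zero_le_real.mpr
      (by linarith [hc i]))).mul_mul_conjTranspose_same U
  have h0 := hB.re_dotProduct_nonneg x
  rw [Matrix.sub_mulVec, dotProduct_sub, Matrix.smul_mulVec, Matrix.one_mulVec,
    dotProduct_smul] at h0
  have hxx : (dotProduct (star x) x) = ((∑ i, Complex.normSq (x i) : ℝ) : ℂ) := by
    simp only [dotProduct, Pi.star_apply, Complex.ofReal_sum]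
    exact Finset.sum_congr rfl fun i _ => (Complex.normSq_eq_conj_mul_self).symm
  rw [hxx] at h0
  simp only [RCLike.re_to_complex, smul_eq_mul, Complex.sub_re, Complex.mul_re,
    Complex.ofReal_re, Complex.ofReal_im, mul_zero, zero_mul, sub_zero] at h0
  linarith

lemma aux_trace_s9 {n : ℕ} (A : Matrix (Fin n) (Fin n) ℂ) (hA : A.IsHermitian) :
    ∑ i, hA.eigenvalues i = ∑ i, (A i i).re := by
  set U : Matrix (Fin n) (Fin n) ℂ := (hA.eigenvectorUnitary : Matrix (Fin n) (Fin n) ℂ) with hUdef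
  have hU : star U * U = 1 := Matrix.mem_unitaryGroup_iff'.mp hA.eigenvectorUnitary.2
  have htr : A.trace = ((∑ i, hA.eigenvalues i : ℝ) : ℂ) := by
    conv_lhs => rw [hA.spectral_theorem, Unitary.conjStarAlgAut_apply]
    rw [Matrix.trace_mul_comm, ← Matrix.mul_assoc, hU, one_mul, Matrix.trace_diagonal]
    push_cast
    rfl
  have : (A.trace).re = ∑ i, (A i i).re := by
    simp [Matrix.trace, Matrix.diag, Complex.re_sum]
  rw [htr] at this
  simpa using this



/-- For an `n × n` complex Hermitian matrix `A` with sorted eigenvalues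
`μ` and any `k` with `1 ≤ k ≤ n - 1` (0-indexed: `k < n - 1`),
`Σ_{i=1}^{n-1} λᵢ(A) ≤ Σ_{i=1}^{n-1} aᵢᵢ - (√((aₙₙ - a_kk)² + 4|a_kn|²) - (aₙₙ - a_kk)) / 2`. -/
theorem partial_sum_eigenvalues_two_by_two_bound
    {n : ℕ} (hn : 0 < n) (A : Matrix (Fin n) (Fin n) ℂ) (hA : A.IsHermitian)
    (μ : Fin n → ℝ) (hμ : ∃ σ : Equiv.Perm (Fin n), μ = hA.eigenvalues ∘ σ)
    (hmono : Monotone μ)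
    (k : Fin n) (hk : (k : ℕ) < n - 1) :
    ∑ i ∈ Finset.univ.filter (fun i : Fin n => (i : ℕ) < n - 1), μ i ≤
      ∑ i ∈ Finset.univ.filter (fun i : Fin n => (i : ℕ) < n - 1), (A i i).re -
        (Real.sqrt (((A ⟨n - 1, by omega⟩ ⟨n - 1, by omega⟩).re - (A k k).re) ^ 2 +
            4 * ‖A k ⟨n - 1, by omega⟩‖ ^ 2) -
          ((A ⟨n - 1, by omega⟩ ⟨n - 1, by omega⟩).re - (A k k).re)) / 2 := by
  set m : Fin n := ⟨n - 1, by omega⟩ with hm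
  set a : ℝ := (A k k).re with ha
  set d : ℝ := (A m m).re with hd
  set b : ℂ := A k m with hb
  set β : ℝ := ‖b‖ with hβ
  set s : ℝ := Real.sqrt ((d - a) ^ 2 + 4 * β ^ 2) with hs
  have hkm : k ≠ m := by
    intro h
    rw [Fin.ext_iff] at h
    simp only [hm] at h
    omega
  have hs0 : 0 ≤ s := Real.sqrt_nonneg _
  have hs2 : s ^ 2 = (d - a) ^ 2 + 4 * β ^ 2 := Real.sq_sqrt (by positivity)
  have hβ0 : 0 ≤ β := norm_nonneg b
  have hsad : a - d ≤ s := by nlinarith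
  have hsda : d - a ≤ s := by nlinarith
  -- the eigenvalue bound
  have hc : ∀ i, hA.eigenvalues i ≤ μ m := by
    obtain ⟨σ, hσ⟩ := hμ
    intro i
    have h1 : μ (σ.symm i) ≤ μ m := by
      apply hmono
      rw [Fin.le_def]
      have := (σ.symm i).isLt
      simp only [hm]
      omega
    calc hA.eigenvalues i = μ (σ.symm i) := by
          rw [hσ, Function.comp_apply, Equiv.apply_symm_apply]
      _ ≤ μ m := h1
  have hR := aux_rayleigh A hA (μ m) hc
  -- hermitian facts
  have hmk : A m k = (starRingEnd ℂ) b := by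
    rw [hb, ← Complex.star_def, ← Matrix.conjTranspose_apply, hA.eq]
  have hkk : A k k = (a : ℂ) := by
    rw [ha]
    have h1 : (starRingEnd ℂ) (A k k) = A k k := by
      rw [← Complex.star_def, ← Matrix.conjTranspose_apply, hA.eq]
    exact (Complex.conj_eq_iff_re.mp h1).symm
  have hmm : A m m = (d : ℂ) := by
    rw [hd]
    have h1 : (starRingEnd ℂ) (A m m) = A m m := by
      rw [← Complex.star_def, ← Matrix.conjTranspose_apply, hA.eq]
    exact (Complex.conj_eq_iff_re.mp h1).symm
  have hcb : (starRingEnd ℂ) b * b = ((β : ℝ) : ℂ) ^ 2 := by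
    rw [mul_comm, Complex.mul_conj, hβ]
    norm_cast
    exact (Complex.sq_norm b).symm
  -- two-point sums
  have two : ∀ f : Fin n → ℂ, (∀ j, j ≠ k → j ≠ m → f j = 0) → ∑ j, f j = f k + f m := by
    intro f hf
    rw [← Finset.sum_subset (Finset.subset_univ {k, m})
      (fun j _ hj => hf j (fun h => hj (by simp [h])) (fun h => hj (by simp [h])))]
    rw [Finset.sum_pair hkm]
  have twoR : ∀ f : Fin n → ℝ, (∀ j, j ≠ k → j ≠ m → f j = 0) → ∑ j, f j = f k + f m := by
    intro f hf
    rw [← Finset.sum_subset (Finset.subset_univ {k, m})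
      (fun j _ hj => hf j (fun h => hj (by simp [h])) (fun h => hj (by simp [h])))]
    rw [Finset.sum_pair hkm]
  -- key eigenvalue lower bound
  have hkey : (a + d + s) / 2 ≤ μ m := by
    have hquad : ((a + d + s) / 2 - a) * ((a + d + s) / 2 - d) = β ^ 2 := by
      linear_combination hs2 / 4
    by_cases hv : 0 < (d - a + s) / 2
    · set v : ℝ := (d - a + s) / 2 with hvdef
      set x : Fin n → ℂ := fun i => if i = k then b else if i = m then ((v : ℝ) : ℂ) else 0
        with hx
      have hxzero : ∀ j, j ≠ k → j ≠ m → x j = 0 := by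
        intro j h1 h2; simp [hx, h1, h2]
      have hxk : x k = b := by simp [hx]
      have hxm : x m = ((v : ℝ) : ℂ) := by simp [hx, hkm.symm, Ne.symm hkm]
      have hN : ∑ i, Complex.normSq (x i) = β ^ 2 + v ^ 2 := by
        rw [twoR _ (fun j h1 h2 => by rw [hxzero j h1 h2]; simp), hxk, hxm]
        rw [← Complex.sq_norm, ← Complex.sq_norm, Complex.norm_real, ← hβ]
        rw [Real.norm_eq_abs, sq_abs]
      have hAvk : (A *ᵥ x) k = A k k * b + A k m * ((v : ℝ) : ℂ) := by
        show ∑ j, A k j * x j = _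
        rw [two _ (fun j h1 h2 => by rw [hxzero j h1 h2, mul_zero]), hxk, hxm]
      have hAvm : (A *ᵥ x) m = A m k * b + A m m * ((v : ℝ) : ℂ) := by
        show ∑ j, A m j * x j = _
        rw [two _ (fun j h1 h2 => by rw [hxzero j h1 h2, mul_zero]), hxk, hxm]
      have hdot : dotProduct (star x) (A *ᵥ x)
          = ((a * β ^ 2 + 2 * v * β ^ 2 + d * v ^ 2 : ℝ) : ℂ) := by
        rw [dotProduct]
        rw [two _ (fun j h1 h2 => by simp [hxzero j h1 h2])]
        simp only [Pi.star_apply, hxk, hxm, hAvk, hAvm, hmk, hkk, hmm, Complex.star_def,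
          Complex.conj_ofReal]
        push_cast
        linear_combination ((a : ℂ) + 2 * (v : ℝ)) * hcb
      have hx2 := hR x
      rw [hN, hdot, Complex.ofReal_re] at hx2
      have hid : a * β ^ 2 + 2 * v * β ^ 2 + d * v ^ 2
          = (a + d + s) / 2 * (β ^ 2 + v ^ 2) := by
        rw [hvdef]
        linear_combination (-(d - a + s) / 2) * hquad
      have hNpos : 0 < β ^ 2 + v ^ 2 :=
        lt_of_lt_of_le (pow_pos hv 2) (le_add_of_nonneg_left (sq_nonneg β))
      have : (a + d + s) / 2 * (β ^ 2 + v ^ 2) ≤ μ m * (β ^ 2 + v ^ 2) := by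
        rw [← hid]; linarith
      exact le_of_mul_le_mul_right this hNpos
    · -- degenerate: s = a - d, bound is just a ≤ μ m
      push_neg at hv
      set x : Fin n → ℂ := fun i => if i = k then 1 else 0 with hx
      have hx2 := hR x
      have hN : ∑ i, Complex.normSq (x i) = 1 := by
        simp [hx, apply_ite Complex.normSq]
      have hdot : dotProduct (star x) (A *ᵥ x) = A k k := by
        rw [dotProduct]
        rw [two _ (fun j h1 h2 => by simp [hx, h1])]
        have h1 : (A *ᵥ x) k = A k k := by
          show ∑ j, A k j * x j = _
          simp [hx, Finset.sum_ite_eq', mul_ite]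
        have h2 : (A *ᵥ x) m = A m k := by
          show ∑ j, A m j * x j = _
          simp [hx, Finset.sum_ite_eq', mul_ite]
        rw [h1, h2]
        simp [hx, hkm.symm, Ne.symm hkm]
      rw [hN, hdot] at hx2
      rw [← ha] at hx2
      linarith
  -- reduce sums over the filter to full sums minus the last entry
  have hfilter : Finset.univ.filter (fun i : Fin n => (i : ℕ) < n - 1)
      = Finset.univ.erase m := by
    ext i
    simp only [Finset.mem_filter, Finset.mem_erase, Finset.mem_univ, and_true, true_and]
    constructor
    · intro h h2
      rw [h2] at h
      simp only [hm] at h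
      omega
    · intro h
      have := i.isLt
      rcases Nat.lt_or_ge (i : ℕ) (n - 1) with h1 | h1
      · exact h1
      · exfalso; exact h (by rw [Fin.ext_iff]; simp only [hm]; omega)
  have htr : ∑ i, μ i = ∑ i, (A i i).re := by
    obtain ⟨σ, hσ⟩ := hμ
    rw [hσ, ← aux_trace_s9 A hA]
    exact Equiv.sum_comp σ hA.eigenvalues
  rw [hfilter, Finset.sum_erase_eq_sub (Finset.mem_univ m),
    Finset.sum_erase_eq_sub (Finset.mem_univ m), htr]
  have : (Real.sqrt (((A ⟨n - 1, by omega⟩ ⟨n - 1, by omega⟩).re - (A k k).re) ^ 2 +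
            4 * ‖A k ⟨n - 1, by omega⟩‖ ^ 2) -
          ((A ⟨n - 1, by omega⟩ ⟨n - 1, by omega⟩).re - (A k k).re)) / 2
      = (s - (d - a)) / 2 := rfl
  rw [this]
  linarith
end
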